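/- arXiv:2312.03622 — 6 statements merged into one kernel-verified Lean document; each statement's English description precedes it below -/
import Mathlib

section
/- Let A ⊆ B be an inclusion of (not necessarily unital) C*-algebras, A a closed *-subalgebra of B. Suppose that for every self-adjoint a ∈ A and every ε > 0 there exists a self-adjoint b ∈ B with finite spectrum (computed in the unitization of B) such that ‖a − b‖ ≤ ε. Then for every nonzero positive a ∈ A, the hereditary C*-subalgebra cl(aBa), the norm closure of {a·b·a : b ∈ B}, has an approximate unit of projections: for every positive x ∈ cl(aBa) and every ε > 0 there exists a projection p ∈ cl(aBa) with ‖p·x − x‖ < ε. -/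
/-
`ramp δ` is zero on `(-∞, δ/2]` and one on `[δ, ∞)`, so `cfcₙ (ramp δ) a` almost acts as a unit on
`x ∈ cl(a B a)` once `δ` is small. Approximate `a` by a self-adjoint `b` with finite spectrum so
closely that `ramp δ` and `ramp (δ/2)` of `a` and `b` differ by at most `β`. The spectral projection
`p = cfcₙ (step (δ/2)) b` fixes `ramp δ` of `b` and is fixed by `e' = cfcₙ (ramp (δ/2)) b`, so the
compression `y = e p e` by `e = cfcₙ (ramp (δ/2)) a` lies in `a B a` and is `2β`-close to `p`.
Then `‖y * y - y‖ ≤ 6β < 1/4`, so `1/2` is not in the spectrum of `y` and `cfcₙ (step (1/2)) y` is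
a projection in `y B y ⊆ a B a`, `14β`-close to `p`; it almost fixes `x`.
-/

open Filter Topology

section Defs

variable {B : Type*} [NonUnitalNormedRing B] [StarRing B] [PartialOrder B]

/-- A projection in a C*-algebra: a self-adjoint idempotent. -/
def IsProjection (p : B) : Prop := star p = p ∧ p * p = p

/-- The hereditary subalgebra `cl(a·S·a)`: the norm closure of `{a * b * a : b ∈ S}`. -/
def herSub (S : Set B) (a : B) : Set B := closure {x : B | ∃ b ∈ S, x = a * b * a}

end Defs

open Set

namespace HerSubProjection

noncomputable def ramp (δ t : ℝ) : ℝ := min 1 (max 0 (2 * t / δ - 1))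

noncomputable def step (c t : ℝ) : ℝ := if c < t then 1 else 0

@[fun_prop]
lemma continuous_ramp (δ : ℝ) : Continuous (ramp δ) := by unfold ramp; fun_prop

@[simp]
lemma ramp_zero (δ : ℝ) : ramp δ 0 = 0 := by norm_num [ramp]

lemma ramp_nonneg (δ t : ℝ) : 0 ≤ ramp δ t := le_min zero_le_one (le_max_left _ _)

lemma ramp_le_one (δ t : ℝ) : ramp δ t ≤ 1 := min_le_left _ _

lemma ramp_of_le {δ t : ℝ} (hδ : 0 < δ) (ht : t ≤ δ / 2) : ramp δ t = 0 := by
  have : 2 * t / δ ≤ 1 := by rw [div_le_one hδ]; linarith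
  simp [ramp, max_eq_left (by linarith : 2 * t / δ - 1 ≤ 0)]

lemma ramp_of_ge {δ t : ℝ} (hδ : 0 < δ) (ht : δ ≤ t) : ramp δ t = 1 := by
  have : 2 ≤ 2 * t / δ := by rw [le_div_iff₀ hδ]; linarith
  exact min_eq_left (le_max_of_le_right (by linarith))

lemma abs_ramp_mul_sub_le {δ t : ℝ} (hδ : 0 < δ) (ht : 0 ≤ t) : |ramp δ t * t - t| ≤ δ := by
  rcases le_or_gt δ t with hδt | htδ
  · simp [ramp_of_ge hδ hδt, hδ.le]
  · have h0 := ramp_nonneg δ t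
    have h1 := ramp_le_one δ t
    rw [abs_le]
    constructor <;> nlinarith

@[simp]
lemma step_zero {c : ℝ} (hc : 0 ≤ c) : step c 0 = 0 := if_neg hc.not_gt

lemma step_mul_self (c t : ℝ) : step c t * step c t = step c t := by
  unfold step; split_ifs <;> norm_num

lemma continuousOn_step {c : ℝ} {s : Set ℝ} (hc : c ∉ s) : ContinuousOn (step c) s := by
  refine ContinuousOn.if (fun t ht => ?_) continuousOn_const continuousOn_const
  have htc : t ∈ frontier (Ioi c) := ht.2
  rw [frontier_Ioi, mem_singleton_iff] at htc
  exact absurd (htc ▸ ht.1) hc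

lemma step_mul_ramp {δ : ℝ} (hδ : 0 < δ) (t : ℝ) : step (δ / 2) t * ramp δ t = ramp δ t := by
  unfold step; split_ifs with h
  · rw [one_mul]
  · rw [zero_mul, ramp_of_le hδ (not_lt.mp h)]

lemma ramp_mul_step {δ : ℝ} (hδ : 0 < δ) (t : ℝ) : ramp δ t * step δ t = step δ t := by
  unfold step; split_ifs with h
  · rw [ramp_of_ge hδ h.le, one_mul]
  · rw [mul_zero]

lemma abs_step_half_sub_le (t : ℝ) : |step (1 / 2) t - t| ≤ 2 * |t * t - t| := by
  have key : |t * t - t| = |t| * |t - 1| := by rw [← abs_mul]; ring_nf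
  unfold step; split_ifs with h
  · rw [key, abs_of_pos (by linarith : (0:ℝ) < t), abs_sub_comm 1 t]
    nlinarith [abs_nonneg (t - 1)]
  · rw [key, zero_sub, abs_neg, abs_of_nonpos (by linarith : t - 1 ≤ 0)]
    nlinarith [abs_nonneg t]

section NormedRing

variable {R : Type*} [NonUnitalNormedRing R]

lemma norm_mul_sub_le_of_mul_eq {p e e' : R} (hp : ‖p‖ ≤ 1) (h : p * e' = e') :
    ‖p * e - e‖ ≤ 2 * ‖e - e'‖ := by
  calc ‖p * e - e‖ = ‖p * (e - e') + (e' - e)‖ := by rw [mul_sub, h]; abel_nf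
    _ ≤ ‖p‖ * ‖e - e'‖ + ‖e - e'‖ := by
        grw [norm_add_le, norm_mul_le, norm_sub_rev e' e]
    _ ≤ 2 * ‖e - e'‖ := by nlinarith [norm_nonneg (e - e')]

lemma norm_mul_mul_sub_le {p e e' : R} (hp : ‖p‖ ≤ 1) (he : ‖e‖ ≤ 1) (hpe' : p * e' = p)
    (he'p : e' * p = p) : ‖e * p * e - p‖ ≤ 2 * ‖e - e'‖ := by
  have hdecomp : e * p * e - p = (e - e') * p * e + p * (e - e') := by
    rw [sub_mul, sub_mul, he'p, mul_sub, hpe']; abel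
  calc ‖e * p * e - p‖ ≤ ‖e - e'‖ * ‖p‖ * ‖e‖ + ‖p‖ * ‖e - e'‖ := by
        grw [hdecomp, norm_add_le, norm_mul_le, norm_mul_le, norm_mul_le]
    _ ≤ ‖e - e'‖ * 1 * 1 + 1 * ‖e - e'‖ := by gcongr
    _ = 2 * ‖e - e'‖ := by ring

lemma norm_mul_self_sub_le {y p : R} (hp : IsIdempotentElem p) (hp1 : ‖p‖ ≤ 1) (hy : ‖y‖ ≤ 1) :
    ‖y * y - y‖ ≤ 3 * ‖y - p‖ := by
  have hdecomp : y * y - y = y * (y - p) + (y - p) * p + (p - y) := by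
    rw [mul_sub, sub_mul, hp.eq]; abel
  calc ‖y * y - y‖ ≤ ‖y‖ * ‖y - p‖ + ‖y - p‖ * ‖p‖ + ‖y - p‖ := by
        grw [hdecomp, norm_add₃_le, norm_mul_le, norm_mul_le, norm_sub_rev p y]
    _ ≤ 1 * ‖y - p‖ + ‖y - p‖ * 1 + ‖y - p‖ := by gcongr
    _ = 3 * ‖y - p‖ := by ring

lemma norm_mul_sub_le_of_norm_le_one {p q e x : R} (hp : ‖p‖ ≤ 1) :
    ‖q * x - x‖ ≤ ‖q - p‖ * ‖x‖ + ‖p * e - e‖ * ‖x‖ + 2 * ‖e * x - x‖ := by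
  have hdecomp : q * x - x = (q - p) * x + p * (x - e * x) + (p * e - e) * x + (e * x - x) := by
    noncomm_ring
  calc ‖q * x - x‖ ≤ ‖q - p‖ * ‖x‖ + ‖p‖ * ‖e * x - x‖ + ‖p * e - e‖ * ‖x‖ + ‖e * x - x‖ := by
        grw [hdecomp, norm_add_le, norm_add₃_le, norm_mul_le, norm_mul_le, norm_mul_le,
          norm_sub_rev x]
    _ ≤ ‖q - p‖ * ‖x‖ + 1 * ‖e * x - x‖ + ‖p * e - e‖ * ‖x‖ + ‖e * x - x‖ := by gcongr
    _ = _ := by ring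

end NormedRing

section CStar

variable {A : Type*} [NonUnitalCStarAlgebra A]

lemma isProjection_of_isStarProjection [PartialOrder A] {p : A} (hp : IsStarProjection p) :
    IsProjection p :=
  ⟨hp.isSelfAdjoint.star_eq, hp.isIdempotentElem.eq⟩

lemma mul_mul_mem_herSub (a m : A) : a * m * a ∈ herSub univ a :=
  subset_closure ⟨m, trivial, rfl⟩

lemma isStarProjection_cfcₙ_step (a : A) {c : ℝ} (hc : 0 ≤ c)
    (h : ContinuousOn (step c) (quasispectrum ℝ a)) : IsStarProjection (cfcₙ (step c) a) where
  isIdempotentElem := by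
    rw [IsIdempotentElem, ← cfcₙ_mul (step c) (step c) a]
    simp only [step_mul_self]
  isSelfAdjoint := cfcₙ_predicate _ a

lemma exists_cfcₙ_eq_mul_mul (a : A) (ha : IsSelfAdjoint a) {f : ℝ → ℝ}
    (hf : ContinuousOn f (quasispectrum ℝ a)) {s : ℝ} (hs : 0 < s)
    (hf0 : ∀ t ∈ quasispectrum ℝ a, |t| < s → f t = 0) : ∃ m, cfcₙ f a = a * m * a := by
  set g : ℝ → ℝ := fun t => f t / max |t| s ^ 2
  have hmax : ∀ t, max |t| s ≠ 0 := fun t => (lt_max_of_lt_right hs).ne'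
  have hg : ContinuousOn g (quasispectrum ℝ a) :=
    hf.div (by fun_prop) fun t _ => pow_ne_zero 2 (hmax t)
  have hf00 : f 0 = 0 := hf0 0 (quasispectrum.zero_mem ℝ a) (by simpa using hs)
  have hg0 : g 0 = 0 := by simp [g, hf00]
  refine ⟨cfcₙ g a, ?_⟩
  have hmul : a * cfcₙ g a * a = cfcₙ (fun t => t * g t * t) a := by
    rw [cfcₙ_mul _ _ a, cfcₙ_mul _ g a, cfcₙ_id' ℝ a]
  rw [hmul]
  refine cfcₙ_congr fun t ht => ?_
  rcases lt_or_ge |t| s with hts | hts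
  · simp [g, hf0 t ht hts]
  · have ht0 : t ≠ 0 := by rintro rfl; simp at hts; linarith
    simp only [g, max_eq_left hts, sq_abs]
    field_simp

lemma cfcₙ_mul_cfcₙ_eq (a : A) {f g k : ℝ → ℝ}
    (hf : ContinuousOn f (quasispectrum ℝ a)) (hf0 : f 0 = 0)
    (hg : ContinuousOn g (quasispectrum ℝ a)) (hg0 : g 0 = 0)
    (h : ∀ t ∈ quasispectrum ℝ a, f t * g t = k t) : cfcₙ f a * cfcₙ g a = cfcₙ k a := by
  rw [← cfcₙ_mul f g a]
  exact cfcₙ_congr h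

lemma abs_mul_self_sub_le_norm {y : A} (hy : IsSelfAdjoint y) {t : ℝ}
    (ht : t ∈ quasispectrum ℝ y) : |t * t - t| ≤ ‖y * y - y‖ := by
  have h : cfcₙ (fun t : ℝ => t * t - t) y = y * y - y := by
    rw [cfcₙ_sub _ _ y, cfcₙ_mul _ _ y, cfcₙ_id' ℝ y]
  simpa [h] using norm_apply_le_norm_cfcₙ (fun t : ℝ => t * t - t) y ht

/-- The spectrum of `y` misses `1/2`, so `step (1/2)` is continuous on it and cuts out a projection;
as `step (1/2)` vanishes near `0`, that projection lies in `y * A * y`. -/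
lemma exists_isStarProjection_mul_mul_near {y : A} (hy : IsSelfAdjoint y)
    (h : ‖y * y - y‖ < 1 / 4) :
    ∃ m, IsStarProjection (y * m * y) ∧ ‖y * m * y - y‖ ≤ 2 * ‖y * y - y‖ := by
  have hcont : ContinuousOn (step (1 / 2)) (quasispectrum ℝ y) := continuousOn_step fun h12 => by
    have := abs_mul_self_sub_le_norm hy h12
    norm_num at this
    linarith
  obtain ⟨m, hm⟩ := exists_cfcₙ_eq_mul_mul y hy hcont (s := 1 / 2) (by norm_num)
    fun t _ ht => if_neg (by linarith [le_abs_self t])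
  refine ⟨m, hm ▸ isStarProjection_cfcₙ_step y (by norm_num) hcont, ?_⟩
  have hsub : cfcₙ (step (1 / 2)) y - y = cfcₙ (fun t => step (1 / 2) t - t) y := by
    rw [cfcₙ_sub _ _ y, cfcₙ_id' ℝ y]
  rw [← hm, hsub]
  exact norm_cfcₙ_le fun t ht =>
    (abs_step_half_sub_le t).trans (by gcongr; exact abs_mul_self_sub_le_norm hy ht)

lemma norm_cfcₙ_ramp_le (a : A) (δ : ℝ) : ‖cfcₙ (ramp δ) a‖ ≤ 1 :=
  norm_cfcₙ_le fun t _ => by rw [Real.norm_of_nonneg (ramp_nonneg δ t)]; exact ramp_le_one δ t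

lemma exists_isStarProjection_near_compression {p e e' : A} (hp : IsStarProjection p)
    (he : IsSelfAdjoint e) (he1 : ‖e‖ ≤ 1) (hpe' : p * e' = p) (he'p : e' * p = p)
    (hee' : ‖e - e'‖ < 1 / 24) :
    ∃ q m, IsStarProjection q ∧ q = e * m * e ∧ ‖q - p‖ ≤ 14 * ‖e - e'‖ := by
  have hp1 := hp.norm_le
  have hy : IsSelfAdjoint (e * p * e) := by
    simpa [he.star_eq] using hp.isSelfAdjoint.conjugate e
  have hy1 : ‖e * p * e‖ ≤ 1 := by
    calc ‖e * p * e‖ ≤ ‖e‖ * ‖p‖ * ‖e‖ := norm_mul₃_le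
      _ ≤ 1 * 1 * 1 := by gcongr
      _ = 1 := by norm_num
  have hyp := norm_mul_mul_sub_le hp1 he1 hpe' he'p
  have hyy := norm_mul_self_sub_le hp.isIdempotentElem hp1 hy1
  obtain ⟨m, hq, hqy⟩ := exists_isStarProjection_mul_mul_near hy (by linarith)
  refine ⟨_, p * e * m * e * p, hq, by noncomm_ring, ?_⟩
  calc ‖e * p * e * m * (e * p * e) - p‖
      ≤ ‖e * p * e * m * (e * p * e) - e * p * e‖ + ‖e * p * e - p‖ :=
        norm_sub_le_norm_sub_add_norm_sub _ _ _
    _ ≤ 14 * ‖e - e'‖ := by linarith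

lemma exists_isStarProjection_ramp {b : A} (hb : (quasispectrum ℝ b).Finite) {δ : ℝ}
    (hδ : 0 < δ) :
    ∃ p, IsStarProjection p ∧ p * cfcₙ (ramp δ) b = cfcₙ (ramp δ) b ∧
      p * cfcₙ (ramp (δ / 2)) b = p ∧ cfcₙ (ramp (δ / 2)) b * p = p := by
  have hstep := hb.continuousOn (step (δ / 2))
  have hstep0 : step (δ / 2) 0 = 0 := step_zero (by positivity)
  refine ⟨cfcₙ (step (δ / 2)) b, isStarProjection_cfcₙ_step b (by positivity) hstep,
    cfcₙ_mul_cfcₙ_eq b hstep hstep0 (by fun_prop) (ramp_zero δ) fun t _ => step_mul_ramp hδ t,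
    cfcₙ_mul_cfcₙ_eq b hstep hstep0 (by fun_prop) (ramp_zero _) fun t _ => ?_,
    cfcₙ_mul_cfcₙ_eq b (by fun_prop) (ramp_zero _) hstep hstep0 fun t _ =>
      ramp_mul_step (by positivity) t⟩
  rw [mul_comm, ramp_mul_step (by positivity) t]

lemma finite_quasispectrum_of_finite_spectrum_inr {b : A}
    (hb : (spectrum ℂ (b : Unitization ℂ A)).Finite) : (quasispectrum ℝ b).Finite := by
  rw [Unitization.quasispectrum_eq_spectrum_inr' ℝ ℂ b, ← spectrum.preimage_algebraMap ℂ]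
  exact hb.preimage (algebraMap ℝ ℂ).injective.injOn

lemma frequently_finite_quasispectrum {a : A}
    (h : ∀ ε : ℝ, 0 < ε →
      ∃ b : A, IsSelfAdjoint b ∧ (spectrum ℂ (b : Unitization ℂ A)).Finite ∧ ‖a - b‖ ≤ ε) :
    ∃ᶠ b in 𝓝[{b | IsSelfAdjoint b}] a, (quasispectrum ℝ b).Finite := by
  intro hev
  obtain ⟨η, hη, hball⟩ := Metric.mem_nhdsWithin_iff.mp hev
  obtain ⟨b, hbsa, hbfin, hab⟩ := h (η / 2) (by positivity)
  refine hball ⟨?_, hbsa⟩ (finite_quasispectrum_of_finite_spectrum_inr hbfin)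
  rw [Metric.mem_ball, dist_eq_norm, norm_sub_rev]
  linarith

lemma eventually_norm_cfcₙ_sub_lt {a : A} (ha : IsSelfAdjoint a) {f : ℝ → ℝ} (hf : Continuous f)
    (hf0 : f 0 = 0) {β : ℝ} (hβ : 0 < β) :
    ∀ᶠ b in 𝓝[{b | IsSelfAdjoint b}] a, ‖cfcₙ f a - cfcₙ f b‖ < β := by
  have hcont : ContinuousOn (cfcₙ f) {b : A | IsSelfAdjoint b} :=
    ContinuousOn.cfcₙ_of_mem_nhdsSet f (s := univ) univ_mem continuousOn_id (fun _ hb => hb)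
  filter_upwards [Metric.tendsto_nhds.mp (hcont a ha) β hβ] with b hb
  rwa [dist_comm, dist_eq_norm] at hb

lemma exists_norm_cfcₙ_ramp_mul_sub_lt [PartialOrder A] [StarOrderedRing A] {a x : A}
    (ha : 0 ≤ a) (hx : x ∈ herSub univ a) {ε : ℝ} (hε : 0 < ε) :
    ∃ δ > 0, ‖cfcₙ (ramp δ) a * x - x‖ < ε := by
  obtain ⟨_, ⟨c, -, rfl⟩, hxc⟩ := Metric.mem_closure_iff.mp hx (ε / 3) (by positivity)
  rw [dist_eq_norm] at hxc
  set δ := ε / 3 / (‖c * a‖ + 1)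
  have hδ : 0 < δ := by positivity
  have hδc : δ * ‖c * a‖ ≤ ε / 3 := by
    rw [div_mul_eq_mul_div, div_le_iff₀ (by positivity)]
    nlinarith [norm_nonneg (c * a)]
  refine ⟨δ, hδ, ?_⟩
  set r := cfcₙ (ramp δ) a
  have hra : ‖r * a - a‖ ≤ δ := by
    have : r * a - a = cfcₙ (fun t => ramp δ t * t - t) a := by
      rw [cfcₙ_sub _ _ a, cfcₙ_mul _ _ a, cfcₙ_id' ℝ a]
    rw [this]
    exact norm_cfcₙ_le fun t ht =>
      abs_ramp_mul_sub_le hδ (quasispectrum_nonneg_of_nonneg a ha t ht)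
  have hdecomp : r * x - x = r * (x - a * c * a) + (r * a - a) * (c * a) + (a * c * a - x) := by
    noncomm_ring
  calc ‖r * x - x‖ ≤ ‖r‖ * ‖x - a * c * a‖ + ‖r * a - a‖ * ‖c * a‖ + ‖x - a * c * a‖ := by
        grw [hdecomp, norm_add₃_le, norm_mul_le, norm_mul_le, norm_sub_rev (a * c * a)]
    _ ≤ 1 * ‖x - a * c * a‖ + δ * ‖c * a‖ + ‖x - a * c * a‖ := by
        gcongr
        exact norm_cfcₙ_ramp_le a δ
    _ < ε := by linarith

end CStar

end HerSubProjection

open HerSubProjection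

theorem stmt5_general {B : Type*} [NonUnitalCStarAlgebra B] [PartialOrder B] [StarOrderedRing B]
    (A : NonUnitalStarSubalgebra ℂ B)
    (h : ∀ a ∈ A, IsSelfAdjoint a → ∀ ε : ℝ, 0 < ε →
      ∃ b : B, IsSelfAdjoint b ∧ (spectrum ℂ (b : Unitization ℂ B)).Finite ∧ ‖a - b‖ ≤ ε) :
    ∀ a ∈ A, 0 ≤ a → a ≠ 0 →
      ∀ x ∈ herSub (Set.univ : Set B) a, 0 ≤ x → ∀ ε : ℝ, 0 < ε →
        ∃ p ∈ herSub (Set.univ : Set B) a, IsProjection p ∧ ‖p * x - x‖ < ε := by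
  intro a haA ha0 _ x hx _ ε hε
  have haSA : IsSelfAdjoint a := .of_nonneg ha0
  obtain ⟨δ, hδ, hδx⟩ := exists_norm_cfcₙ_ramp_mul_sub_lt ha0 hx (ε := ε / 4) (by positivity)
  obtain ⟨β, hβ, hβ24, hβx⟩ : ∃ β > 0, β < 1 / 24 ∧ 16 * β * ‖x‖ < ε / 2 := by
    have hsmall : ∀ᶠ β in 𝓝 (0 : ℝ), β < 1 / 24 ∧ 16 * β * ‖x‖ < ε / 2 :=
      (eventually_lt_nhds (by norm_num)).and <| (Continuous.tendsto (by fun_prop) 0).eventually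
        (eventually_lt_nhds (by simpa using half_pos hε))
    exact ((hsmall.filter_mono nhdsWithin_le_nhds).and
      (self_mem_nhdsWithin (s := Ioi 0))).exists.imp fun β hβ => ⟨hβ.2, hβ.1⟩
  obtain ⟨b, hbfin, hfb, hgb⟩ := ((frequently_finite_quasispectrum (h a haA haSA)).and_eventually
    ((eventually_norm_cfcₙ_sub_lt haSA (continuous_ramp δ) (ramp_zero δ) hβ).and
      (eventually_norm_cfcₙ_sub_lt haSA (continuous_ramp (δ / 2)) (ramp_zero _) hβ))).exists
  obtain ⟨p, hp, hpf, hpg, hgp⟩ := exists_isStarProjection_ramp hbfin hδ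
  obtain ⟨q, m, hq, rfl, hqp⟩ := exists_isStarProjection_near_compression hp
    (cfcₙ_predicate _ a) (norm_cfcₙ_ramp_le a _) hpg hgp (hgb.trans hβ24)
  obtain ⟨n, hn⟩ := exists_cfcₙ_eq_mul_mul a haSA (continuous_ramp (δ / 2)).continuousOn
    (s := δ / 4) (by positivity) fun t _ ht =>
      ramp_of_le (by positivity) (by linarith [le_abs_self t])
  refine ⟨_, ?_, isProjection_of_isStarProjection hq, ?_⟩
  · rw [hn, show a * n * a * m * (a * n * a) = a * (n * a * m * a * n) * a by noncomm_ring]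
    exact mul_mul_mem_herSub a _
  · calc _ ≤ _ := norm_mul_sub_le_of_norm_le_one hp.norm_le
      _ ≤ 14 * β * ‖x‖ + 2 * β * ‖x‖ + 2 * (ε / 4) := by
        gcongr
        · linarith
        · exact (norm_mul_sub_le_of_mul_eq hp.norm_le hpf).trans (by linarith)
      _ < ε := by linarith

theorem stmt5 {B : Type*} [NonUnitalCStarAlgebra B] [PartialOrder B] [StarOrderedRing B]
    (A : NonUnitalStarSubalgebra ℂ B) (hA : IsClosed (A : Set B))
    (h : ∀ a ∈ A, IsSelfAdjoint a → ∀ ε : ℝ, 0 < ε →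
      ∃ b : B, IsSelfAdjoint b ∧ (spectrum ℂ (b : Unitization ℂ B)).Finite ∧ ‖a - b‖ ≤ ε) :
    ∀ a ∈ A, 0 ≤ a → a ≠ 0 →
      ∀ x ∈ herSub (Set.univ : Set B) a, 0 ≤ x → ∀ ε : ℝ, 0 < ε →
        ∃ p ∈ herSub (Set.univ : Set B) a, IsProjection p ∧ ‖p * x - x‖ < ε :=
  stmt5_general A h
end

section
/- Let A and B be C*-algebras. The set of *-homomorphisms from A to B which have real rank zero is closed in the point-norm topology: if (θ_i) is a net of *-homomorphisms A → B, each having real rank zero, and θ_i(a) → θ(a) in norm for every a ∈ A, where θ : A → B is a *-homomorphism, then θ has real rank zero. -/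
open Filter Topology

section Defs

variable {B : Type*} [NonUnitalNormedRing B] [StarRing B] [PartialOrder B]

/-- `T` has an approximate unit of projections. -/
def HasApproxUnitOfProjections (T : Set B) : Prop :=
  ∀ x ∈ T, 0 ≤ x → ∀ ε : ℝ, 0 < ε → ∃ p ∈ T, IsProjection p ∧ ‖p * x - x‖ < ε

/-- The inclusion `A ⊆ S` of C*-algebras has real rank zero. -/
def InclusionRealRankZero (A S : Set B) : Prop :=
  ∀ a ∈ A, 0 ≤ a → a ≠ 0 → HasApproxUnitOfProjections (herSub S a)

end Defs

/-- A *-homomorphism `θ : A → B` has real rank zero if the inclusion `θ(A) ⊆ B`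
has real rank zero. -/
def StarHomRealRankZero {A B : Type*} [NonUnitalCStarAlgebra A] [NonUnitalCStarAlgebra B]
    [PartialOrder B] (θ : A →⋆ₙₐ[ℂ] B) : Prop :=
  InclusionRealRankZero (Set.range θ) (Set.univ : Set B)

noncomputable section RRZAux

/-- ramp function: 0 below `u`, 1 above `v`, linear in between. -/
private def rmp (u v : ℝ) : ℝ → ℝ := fun t => min 1 (max ((t - u) / (v - u)) 0)

private lemma rmp_continuous (u v : ℝ) : Continuous (rmp u v) :=
  continuous_const.min (((continuous_id.sub continuous_const).div_const _).max continuous_const)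

private lemma rmp_nonneg (u v t : ℝ) : 0 ≤ rmp u v t :=
  le_min zero_le_one (le_max_right _ _)

private lemma rmp_le_one (u v t : ℝ) : rmp u v t ≤ 1 := min_le_left _ _

private lemma rmp_eq_zero {u v t : ℝ} (huv : u < v) (h : t ≤ u) : rmp u v t = 0 := by
  have h1 : (t - u) / (v - u) ≤ 0 :=
    div_nonpos_of_nonpos_of_nonneg (by linarith) (by linarith)
  simp only [rmp]
  rw [max_eq_right h1, min_eq_right zero_le_one]

private lemma rmp_eq_one {u v t : ℝ} (huv : u < v) (h : v ≤ t) : rmp u v t = 1 := by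
  have h1 : (1:ℝ) ≤ (t - u) / (v - u) := by
    rw [le_div_iff₀ (by linarith)]; linarith
  simp only [rmp]
  rw [max_eq_left (le_trans zero_le_one h1), min_eq_left h1]

private lemma rmp_zero {u v : ℝ} (hu : 0 ≤ u) (huv : u < v) : rmp u v 0 = 0 := by
  rcases eq_or_lt_of_le hu with h | h
  · simp only [rmp, ← h]
    rw [zero_sub, max_eq_right, min_eq_right zero_le_one]
    exact div_nonpos_of_nonpos_of_nonneg (by linarith) (by linarith)
  · exact rmp_eq_zero huv (le_of_lt h)

private lemma abs_rmp_le_one (u v t : ℝ) : |rmp u v t| ≤ 1 :=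
  abs_le.mpr ⟨by linarith [rmp_nonneg u v t], rmp_le_one u v t⟩

variable {B : Type*} [NonUnitalCStarAlgebra B]

private lemma her_closed (a : B) : IsClosed (herSub (Set.univ : Set B) a) := by
  rw [herSub]; exact isClosed_closure

private lemma her_mem (a b : B) : a * b * a ∈ herSub (Set.univ : Set B) a :=
  subset_closure ⟨b, Set.mem_univ b, rfl⟩

private lemma her_zero_mem (a : B) : (0 : B) ∈ herSub (Set.univ : Set B) a := by
  simpa using her_mem a 0

private lemma her_mem_of_tendsto {a y : B} {u : ℕ → B}
    (hu : ∀ n, u n ∈ herSub (Set.univ : Set B) a) (h : Tendsto u atTop (nhds y)) :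
    y ∈ herSub (Set.univ : Set B) a := by
  have h1 : y ∈ closure (herSub (Set.univ : Set B) a) :=
    mem_closure_of_tendsto h (Eventually.of_forall hu)
  rwa [(her_closed a).closure_eq] at h1

private lemma her_seq {a y : B} (hy : y ∈ herSub (Set.univ : Set B) a) :
    ∃ u : ℕ → B, (∀ n, ∃ m, u n = a * m * a) ∧ Tendsto u atTop (nhds y) := by
  have hy' : y ∈ closure {x : B | ∃ b ∈ (Set.univ : Set B), x = a * b * a} := hy
  obtain ⟨u, huS, hulim⟩ := mem_closure_iff_seq_limit.mp hy'
  exact ⟨u, fun n => by obtain ⟨m, -, hm⟩ := huS n; exact ⟨m, hm⟩, hulim⟩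

private lemma her_add_mem {a u v : B} (hu : u ∈ herSub (Set.univ : Set B) a)
    (hv : v ∈ herSub (Set.univ : Set B) a) : u + v ∈ herSub (Set.univ : Set B) a := by
  obtain ⟨f, hfS, hf⟩ := her_seq hu
  obtain ⟨g, hgS, hg⟩ := her_seq hv
  refine her_mem_of_tendsto (u := fun n => f n + g n) (fun n => ?_) (hf.add hg)
  obtain ⟨m₁, hm₁⟩ := hfS n; obtain ⟨m₂, hm₂⟩ := hgS n
  show f n + g n ∈ herSub Set.univ a
  rw [hm₁, hm₂]
  have : a * m₁ * a + a * m₂ * a = a * (m₁ + m₂) * a := by noncomm_ring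
  rw [this]; exact her_mem a _

private lemma her_mul_mem {a u v : B} (hu : u ∈ herSub (Set.univ : Set B) a)
    (hv : v ∈ herSub (Set.univ : Set B) a) : u * v ∈ herSub (Set.univ : Set B) a := by
  obtain ⟨f, hfS, hf⟩ := her_seq hu
  obtain ⟨g, hgS, hg⟩ := her_seq hv
  refine her_mem_of_tendsto (u := fun n => f n * g n) (fun n => ?_) (hf.mul hg)
  obtain ⟨m₁, hm₁⟩ := hfS n; obtain ⟨m₂, hm₂⟩ := hgS n
  show f n * g n ∈ herSub Set.univ a
  rw [hm₁, hm₂]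
  have : a * m₁ * a * (a * m₂ * a) = a * (m₁ * a * a * m₂) * a := by noncomm_ring
  rw [this]; exact her_mem a _

private lemma her_smul_mem {a u : B} (r : ℝ) (hu : u ∈ herSub (Set.univ : Set B) a) :
    r • u ∈ herSub (Set.univ : Set B) a := by
  obtain ⟨f, hfS, hf⟩ := her_seq hu
  refine her_mem_of_tendsto (u := fun n => r • f n) (fun n => ?_) (hf.const_smul r)
  obtain ⟨m, hm⟩ := hfS n
  show r • f n ∈ herSub Set.univ a
  rw [hm]
  have : r • (a * m * a) = a * (r • m) * a := by
    rw [mul_smul_comm, smul_mul_assoc]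
  rw [this]; exact her_mem a _

/-- `pw y n = y^(n+1)` in a non-unital ring. -/
private def pw (y : B) : ℕ → B
  | 0 => y
  | n + 1 => pw y n * y

private lemma pw_continuous (n : ℕ) : Continuous (fun y : B => pw y n) := by
  induction n with
  | zero => exact continuous_id
  | succ n ih => exact ih.mul continuous_id

private lemma pw_mem_her {a y : B} (hy : y ∈ herSub (Set.univ : Set B) a) :
    ∀ n, pw y n ∈ herSub (Set.univ : Set B) a
  | 0 => hy
  | n + 1 => her_mul_mem (pw_mem_her hy n) hy

private lemma cfcn_pw {y : B} (hy : IsSelfAdjoint y) :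
    ∀ n, cfcₙ (fun t : ℝ => t ^ (n + 1)) y = pw y n
  | 0 => by
      have : (fun t : ℝ => t ^ (0 + 1)) = (id : ℝ → ℝ) := by ext t; simp
      rw [this, cfcₙ_id ℝ y hy]; rfl
  | n + 1 => by
      have h1 : (fun t : ℝ => t ^ (n + 1 + 1)) = fun t : ℝ => t ^ (n + 1) * t := by
        ext t; ring
      rw [h1, cfcₙ_mul _ _ y (by fun_prop) (by simp) (by fun_prop) (by simp),
        cfcₙ_id' ℝ y hy, cfcn_pw hy n]
      rfl

private lemma cfcn_polysum {y : B} (hy : IsSelfAdjoint y) (c : ℕ → ℝ) (n : ℕ) :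
    cfcₙ (fun t : ℝ => ∑ k ∈ Finset.range n, c k * t ^ (k + 1)) y
      = ∑ k ∈ Finset.range n, c k • pw y k := by
  induction n with
  | zero => simp
  | succ n ih =>
      have h1 : (fun t : ℝ => ∑ k ∈ Finset.range (n + 1), c k * t ^ (k + 1))
          = fun t : ℝ => (∑ k ∈ Finset.range n, c k * t ^ (k + 1)) + c n * t ^ (n + 1) := by
        ext t; rw [Finset.sum_range_succ]
      have hc1 : Continuous (fun t : ℝ => ∑ k ∈ Finset.range n, c k * t ^ (k + 1)) := by
        fun_prop
      rw [h1, cfcₙ_add _ _ y hc1.continuousOn (by simp) (by fun_prop) (by simp), ih,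
        cfcₙ_const_mul (c n) _ y (by fun_prop) (by simp), cfcn_pw hy n,
        Finset.sum_range_succ]

private lemma quasi_abs_le {z : B} {t : ℝ} (ht : t ∈ quasispectrum ℝ z) : |t| ≤ ‖z‖ := by
  rw [Unitization.quasispectrum_eq_spectrum_inr' ℝ ℂ] at ht
  have := spectrum.norm_le_norm_of_mem ht
  simpa [Unitization.norm_inr] using this

private lemma norm_mul3_le (u w v : B) : ‖u * w * v‖ ≤ ‖u‖ * ‖w‖ * ‖v‖ :=
  le_trans (norm_mul_le _ _) (by gcongr; exact norm_mul_le _ _)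

open Polynomial in
private lemma approx_poly (f : ℝ → ℝ) (hf : Continuous f) (hf0 : f 0 = 0)
    (R : ℝ) (hR : 0 < R) {ε : ℝ} (hε : 0 < ε) :
    ∃ (n : ℕ) (c : ℕ → ℝ), ∀ z : B, IsSelfAdjoint z → ‖z‖ ≤ R →
      ‖cfcₙ f z - ∑ k ∈ Finset.range n, c k • pw z k‖ ≤ ε := by
  obtain ⟨P, hP⟩ := exists_polynomial_near_of_continuousOn (-R) R f hf.continuousOn (ε/2)
    (by positivity)
  set Q : Polynomial ℝ := P - Polynomial.C (P.coeff 0) with hQdef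
  have hQ0 : Q.coeff 0 = 0 := by simp [hQdef]
  have hQe : ∀ t : ℝ, Q.eval t = P.eval t - P.eval 0 := by
    intro t; simp [hQdef, Polynomial.coeff_zero_eq_eval_zero]
  have hB : ∀ t ∈ Set.Icc (-R) R, |f t - Q.eval t| ≤ ε := by
    intro t ht
    have h1 := hP t ht
    have h2 := hP 0 ⟨by linarith, by linarith⟩
    rw [hf0, sub_zero] at h2
    rw [hQe]
    have h3 : f t - (P.eval t - P.eval 0) = -(P.eval t - f t) + P.eval 0 := by ring
    rw [h3]
    calc |(-(P.eval t - f t)) + P.eval 0| ≤ |(-(P.eval t - f t))| + |P.eval 0| := abs_add_le _ _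
      _ ≤ ε := by rw [abs_neg]; linarith
  have hsum : ∀ t : ℝ, (∑ k ∈ Finset.range Q.natDegree, Q.coeff (k+1) * t ^ (k+1))
      = Q.eval t := by
    intro t
    conv_rhs => rw [Polynomial.eval_eq_sum_range]
    rw [Finset.sum_range_succ']
    simp [hQ0]
  refine ⟨Q.natDegree, fun k => Q.coeff (k+1), fun z hz hzR => ?_⟩
  rw [← cfcn_polysum hz]
  have hgc : Continuous
      (fun t : ℝ => ∑ k ∈ Finset.range Q.natDegree, Q.coeff (k+1) * t ^ (k+1)) := by fun_prop
  rw [← cfcₙ_sub f _ z hf.continuousOn hf0 hgc.continuousOn (by simp)]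
  refine norm_cfcₙ_le fun t ht => ?_
  have htR : t ∈ Set.Icc (-R) R := by
    have := abs_le.mp ((quasi_abs_le ht).trans hzR)
    exact ⟨this.1, this.2⟩
  rw [hsum t, Real.norm_eq_abs]
  exact hB t htR

private lemma cfcn_close {a : B} (ha : IsSelfAdjoint a) (f : ℝ → ℝ) (hf : Continuous f)
    (hf0 : f 0 = 0) {ε : ℝ} (hε : 0 < ε) :
    ∃ δ : ℝ, 0 < δ ∧ ∀ s : B, IsSelfAdjoint s → ‖s - a‖ < δ → ‖cfcₙ f s - cfcₙ f a‖ < ε := by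
  obtain ⟨n, c, hnc⟩ := approx_poly (B := B) f hf hf0 (‖a‖ + 1) (by positivity) (ε := ε/4) (by positivity)
  have hPc : Continuous (fun y : B => ∑ k ∈ Finset.range n, c k • pw y k) :=
    continuous_finset_sum _ fun k _ => (pw_continuous k).const_smul (c k)
  obtain ⟨δ₁, hδ₁, hP1⟩ := Metric.continuousAt_iff.mp hPc.continuousAt (ε/4) (by positivity)
  refine ⟨min δ₁ 1, by positivity, fun s hs hsa => ?_⟩
  have h1 : ‖s - a‖ < δ₁ := lt_of_lt_of_le hsa (min_le_left _ _)
  have h2 : ‖s‖ ≤ ‖a‖ + 1 := by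
    have h4 := norm_sub_norm_le s a
    have h3 : ‖s - a‖ ≤ 1 := le_of_lt (lt_of_lt_of_le hsa (min_le_right _ _))
    linarith
  have hA := hnc s hs h2
  have hB := hnc a ha (by linarith [norm_nonneg a])
  have hC : ‖(∑ k ∈ Finset.range n, c k • pw s k) - ∑ k ∈ Finset.range n, c k • pw a k‖
      < ε/4 := by
    have := hP1 (show dist s a < δ₁ by rwa [dist_eq_norm])
    rwa [dist_eq_norm] at this
  have hsplit : cfcₙ f s - cfcₙ f a
      = (cfcₙ f s - ∑ k ∈ Finset.range n, c k • pw s k)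
        + ((∑ k ∈ Finset.range n, c k • pw s k) - ∑ k ∈ Finset.range n, c k • pw a k)
        + ((∑ k ∈ Finset.range n, c k • pw a k) - cfcₙ f a) := by abel
  rw [hsplit]
  have hn3 : ‖(cfcₙ f s - ∑ k ∈ Finset.range n, c k • pw s k)
        + ((∑ k ∈ Finset.range n, c k • pw s k) - ∑ k ∈ Finset.range n, c k • pw a k)
        + ((∑ k ∈ Finset.range n, c k • pw a k) - cfcₙ f a)‖
      ≤ ‖cfcₙ f s - ∑ k ∈ Finset.range n, c k • pw s k‖
        + ‖(∑ k ∈ Finset.range n, c k • pw s k) - ∑ k ∈ Finset.range n, c k • pw a k‖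
        + ‖(∑ k ∈ Finset.range n, c k • pw a k) - cfcₙ f a‖ := norm_add₃_le
  have hB' : ‖(∑ k ∈ Finset.range n, c k • pw a k) - cfcₙ f a‖ ≤ ε/4 := by
    rw [norm_sub_rev]; exact hB
  linarith

private lemma cfcn_mem_her {a W : B} (hW : IsSelfAdjoint W)
    (hmem : W ∈ herSub (Set.univ : Set B) a)
    (g : ℝ → ℝ) (hg : Continuous g) (hg0 : g 0 = 0) :
    cfcₙ g W ∈ herSub (Set.univ : Set B) a := by
  rw [← (her_closed a).closure_eq]
  refine Metric.mem_closure_iff.mpr fun ε hε => ?_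
  obtain ⟨n, c, hnc⟩ := approx_poly (B := B) g hg hg0 (‖W‖ + 1) (by positivity) (ε := ε/2) (by positivity)
  refine ⟨∑ k ∈ Finset.range n, c k • pw W k, ?_, ?_⟩
  · have hmm : ∀ m : ℕ, (∑ k ∈ Finset.range m, c k • pw W k) ∈ herSub (Set.univ : Set B) a := by
      intro m
      induction m with
      | zero => simpa using her_zero_mem a
      | succ m ih =>
          rw [Finset.sum_range_succ]
          exact her_add_mem ih (her_smul_mem _ (pw_mem_her hmem m))
    exact hmm n
  · rw [dist_eq_norm]
    exact lt_of_le_of_lt (hnc W hW (by linarith [norm_nonneg W])) (by linarith)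

private lemma proj_spec {p W : B} (hp1 : star p = p) (hp2 : p * p = p) (hpn : ‖p‖ ≤ 1)
    {ρ : ℝ} (hρ : 0 < ρ) (hρ1 : ρ ≤ 1) (hWp : ‖W - p‖ ≤ ρ^2/4) :
    ∀ t ∈ quasispectrum ℝ W, |t| ≤ ρ ∨ |t - 1| ≤ ρ := by
  intro t ht
  by_contra hcon
  push_neg at hcon
  obtain ⟨h1, h2⟩ := hcon
  rw [Unitization.quasispectrum_eq_spectrum_inr' ℝ ℂ] at ht
  apply spectrum.mem_iff.mp ht
  have habs1 : ρ < |t| := h1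
  have habs2 : ρ < |t - 1| := h2
  set z : ℂ := (t : ℂ) with hz
  have ht0 : t ≠ 0 := by
    intro h; rw [h] at habs1; simp at habs1; linarith
  have ht1 : t - 1 ≠ 0 := by
    intro h; rw [h] at habs2; simp at habs2; linarith
  have hz0 : z ≠ 0 := by simpa [hz] using ht0
  have hz1 : z - 1 ≠ 0 := by
    simp only [hz]
    intro h
    apply ht1
    have : ((t - 1 : ℝ) : ℂ) = 0 := by push_cast; linear_combination h
    exact_mod_cast this
  set p' : Unitization ℂ B := (p : Unitization ℂ B) with hp'
  have hpp : p' * p' = p' := by rw [hp', ← Unitization.inr_mul, hp2]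
  set μ : ℂ := (z - 1)⁻¹ * z⁻¹ with hμ
  set v : Unitization ℂ B := z⁻¹ • 1 + μ • p' with hv
  have hzμ : z * μ - z⁻¹ - μ = 0 := by
    rw [hμ]; field_simp; ring
  have m1 : (z • (1 : Unitization ℂ B)) * (z⁻¹ • (1 : Unitization ℂ B)) = (z * z⁻¹) • 1 := by
    rw [smul_mul_smul_comm, one_mul]
  have m2 : (z • (1 : Unitization ℂ B)) * (μ • p') = (z * μ) • p' := by
    rw [smul_mul_smul_comm, one_mul]
  have m3 : p' * (z⁻¹ • (1 : Unitization ℂ B)) = z⁻¹ • p' := by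
    rw [mul_smul_comm, mul_one]
  have m4 : p' * (μ • p') = μ • p' := by rw [mul_smul_comm, hpp]
  have m5 : (z⁻¹ • (1 : Unitization ℂ B)) * (z • (1 : Unitization ℂ B)) = (z⁻¹ * z) • 1 := by
    rw [smul_mul_smul_comm, one_mul]
  have m6 : (z⁻¹ • (1 : Unitization ℂ B)) * p' = z⁻¹ • p' := by
    rw [smul_mul_assoc, one_mul]
  have m7 : (μ • p') * (z • (1 : Unitization ℂ B)) = (z * μ) • p' := by
    rw [smul_mul_smul_comm, mul_one, mul_comm]
  have m8 : (μ • p') * p' = μ • p' := by rw [smul_mul_assoc, hpp]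
  have hcoef : ∀ w : Unitization ℂ B, (z * μ) • w - (z⁻¹ • w + μ • w)
      = (z * μ - z⁻¹ - μ) • w := by
    intro w; rw [sub_smul, sub_smul]; abel
  have key1 : (z • (1 : Unitization ℂ B) - p') * v = 1 := by
    have e1 : (z • (1 : Unitization ℂ B) - p') * v
        = (z * z⁻¹) • 1 + ((z * μ) • p' - (z⁻¹ • p' + μ • p')) := by
      rw [hv, sub_mul, mul_add, mul_add, m1, m2, m3, m4]; abel
    rw [e1, hcoef, mul_inv_cancel₀ hz0, hzμ, one_smul, zero_smul, add_zero]
  have key2 : v * (z • (1 : Unitization ℂ B) - p') = 1 := by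
    have e2 : v * (z • (1 : Unitization ℂ B) - p')
        = (z⁻¹ * z) • 1 + ((z * μ) • p' - (z⁻¹ • p' + μ • p')) := by
      rw [hv, mul_sub, add_mul, add_mul, m5, m6, m7, m8]; abel
    rw [e2, hcoef, inv_mul_cancel₀ hz0, hzμ, one_smul, zero_smul, add_zero]
  have hunit1 : IsUnit (z • (1 : Unitization ℂ B) - p') := ⟨⟨_, v, key1, key2⟩, rfl⟩
  have hnz : ‖z‖ = |t| := by rw [hz, Complex.norm_real, Real.norm_eq_abs]
  have hnz1 : ‖z - 1‖ = |t - 1| := by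
    have : z - 1 = ((t - 1 : ℝ) : ℂ) := by push_cast; ring
    rw [this, Complex.norm_real, Real.norm_eq_abs]
  have hnp' : ‖p'‖ ≤ 1 := by rw [hp', Unitization.norm_inr]; exact hpn
  have hρinv : (0:ℝ) < ρ⁻¹ := by positivity
  have hnv : ‖v‖ ≤ ρ⁻¹ + ρ⁻¹ * ρ⁻¹ := by
    calc ‖v‖ ≤ ‖z⁻¹ • (1 : Unitization ℂ B)‖ + ‖μ • p'‖ := norm_add_le _ _
      _ = ‖z⁻¹‖ * 1 + ‖μ‖ * ‖p'‖ := by rw [norm_smul, norm_smul, norm_one]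
      _ ≤ ρ⁻¹ + ρ⁻¹ * ρ⁻¹ := by
          have b1 : ‖z⁻¹‖ ≤ ρ⁻¹ := by
            rw [norm_inv, hnz]
            exact inv_anti₀ hρ (le_of_lt habs1)
          have b2 : ‖μ‖ ≤ ρ⁻¹ * ρ⁻¹ := by
            rw [hμ, norm_mul, norm_inv, norm_inv, hnz, hnz1]
            have i1 : |t|⁻¹ ≤ ρ⁻¹ := inv_anti₀ hρ (le_of_lt habs1)
            have i2 : |t - 1|⁻¹ ≤ ρ⁻¹ := inv_anti₀ hρ (le_of_lt habs2)
            exact mul_le_mul i2 i1 (by positivity) (le_of_lt hρinv)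
          have b3 : ‖μ‖ * ‖p'‖ ≤ ρ⁻¹ * ρ⁻¹ := by
            calc ‖μ‖ * ‖p'‖ ≤ ‖μ‖ * 1 := by
                  exact mul_le_mul_of_nonneg_left hnp' (norm_nonneg μ)
              _ = ‖μ‖ := mul_one _
              _ ≤ ρ⁻¹ * ρ⁻¹ := b2
          linarith
  have hW' : ((W : Unitization ℂ B) - p') = ((W - p : B) : Unitization ℂ B) := by
    rw [hp', Unitization.inr_sub]
  have hnWp : ‖(W : Unitization ℂ B) - p'‖ ≤ ρ^2/4 := by
    rw [hW', Unitization.norm_inr]; exact hWp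
  have hsmall : ‖v * ((W : Unitization ℂ B) - p')‖ < 1 := by
    calc ‖v * ((W : Unitization ℂ B) - p')‖ ≤ ‖v‖ * ‖(W : Unitization ℂ B) - p'‖ :=
          norm_mul_le _ _
      _ ≤ (ρ⁻¹ + ρ⁻¹ * ρ⁻¹) * (ρ^2/4) :=
          mul_le_mul hnv hnWp (norm_nonneg _) (by positivity)
      _ = ρ/4 + 1/4 := by field_simp
      _ < 1 := by linarith
  have hunit2 : IsUnit (1 - v * ((W : Unitization ℂ B) - p')) :=
    (Units.oneSub _ hsmall).isUnit
  have halg : algebraMap ℝ (Unitization ℂ B) t = z • 1 := by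
    rw [IsScalarTower.algebraMap_apply ℝ ℂ (Unitization ℂ B), Algebra.algebraMap_eq_smul_one]
    norm_num [hz]
  have hrepr : algebraMap ℝ (Unitization ℂ B) t - (W : Unitization ℂ B)
      = (z • (1 : Unitization ℂ B) - p') * (1 - v * ((W : Unitization ℂ B) - p')) := by
    rw [mul_sub, mul_one, ← mul_assoc, key1, one_mul, halg]
    abel
  rw [hrepr]
  exact hunit1.mul hunit2

section OrderAux

variable [PartialOrder B] [StarOrderedRing B]

private lemma cfc_unit_err {a : B} (ha0 : 0 ≤ a) {η : ℝ} (hη : 0 < η) :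
    ‖cfcₙ (rmp (6*η) (7*η)) a * a - a‖ ≤ 7*η ∧
      ‖a * cfcₙ (rmp (6*η) (7*η)) a - a‖ ≤ 7*η := by
  have ha : IsSelfAdjoint a := IsSelfAdjoint.of_nonneg ha0
  have huv : 6*η < 7*η := by linarith
  have hcont := rmp_continuous (6*η) (7*η)
  have h0 : rmp (6*η) (7*η) 0 = 0 := rmp_zero (by linarith) huv
  have hpt : ∀ t ∈ quasispectrum ℝ a, |rmp (6*η) (7*η) t * t - t| ≤ 7*η := by
    intro t htq
    have ht0 : 0 ≤ t := quasispectrum_nonneg_of_nonneg a ha0 t htq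
    rcases le_or_gt (7*η) t with h | h
    · rw [rmp_eq_one huv h]; simpa using by positivity
    · have e : rmp (6*η) (7*η) t * t - t = (rmp (6*η) (7*η) t - 1) * t := by ring
      rw [e, abs_mul]
      have b1 : |rmp (6*η) (7*η) t - 1| ≤ 1 := by
        have := rmp_nonneg (6*η) (7*η) t
        have := rmp_le_one (6*η) (7*η) t
        rw [abs_le]; constructor <;> linarith
      have b2 : |t| ≤ 7*η := by rw [abs_of_nonneg ht0]; linarith
      calc |rmp (6*η) (7*η) t - 1| * |t| ≤ 1 * (7*η) :=
            mul_le_mul b1 b2 (abs_nonneg t) zero_le_one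
        _ = 7*η := one_mul _
  constructor
  · have e3 : cfcₙ (fun t : ℝ => rmp (6*η) (7*η) t * t - t) a
        = cfcₙ (rmp (6*η) (7*η)) a * a - a := by
      rw [cfcₙ_sub (fun t : ℝ => rmp (6*η) (7*η) t * t) (fun t : ℝ => t) a
        ((hcont.mul continuous_id).continuousOn) (by simp [h0])
        continuous_id.continuousOn rfl,
        cfcₙ_mul (rmp (6*η) (7*η)) (fun t : ℝ => t) a hcont.continuousOn h0
        continuous_id.continuousOn rfl, cfcₙ_id' ℝ a ha]
    rw [← e3]
    exact norm_cfcₙ_le fun t htq => by rw [Real.norm_eq_abs]; exact hpt t htq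
  · have e3 : cfcₙ (fun t : ℝ => t * rmp (6*η) (7*η) t - t) a
        = a * cfcₙ (rmp (6*η) (7*η)) a - a := by
      rw [cfcₙ_sub (fun t : ℝ => t * rmp (6*η) (7*η) t) (fun t : ℝ => t) a
        ((continuous_id.mul hcont).continuousOn) (by simp [h0])
        continuous_id.continuousOn rfl,
        cfcₙ_mul (fun t : ℝ => t) (rmp (6*η) (7*η)) a continuous_id.continuousOn rfl
        hcont.continuousOn h0, cfcₙ_id' ℝ a ha]
    rw [← e3]
    refine norm_cfcₙ_le fun t htq => ?_
    rw [Real.norm_eq_abs, mul_comm]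
    exact hpt t htq

private lemma approx_unit {a x : B} (ha0 : 0 ≤ a) (hx : x ∈ herSub (Set.univ : Set B) a)
    {ε : ℝ} (hε : 0 < ε) :
    ∃ η : ℝ, 0 < η ∧
      ‖cfcₙ (rmp (6*η) (7*η)) a * x * cfcₙ (rmp (6*η) (7*η)) a - x‖ < ε := by
  have hx' : x ∈ closure {y : B | ∃ m ∈ (Set.univ : Set B), y = a * m * a} := hx
  obtain ⟨y, hyS, hyd⟩ := Metric.mem_closure_iff.mp hx' (ε/3) (by positivity)
  obtain ⟨m, -, rfl⟩ := hyS
  have hC0 : (0:ℝ) ≤ ‖m‖ := norm_nonneg m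
  have hD0 : (0:ℝ) ≤ ‖a‖ := norm_nonneg a
  refine ⟨ε / (42 * (‖m‖+1) * (‖a‖+1)), by positivity, ?_⟩
  set η := ε / (42 * (‖m‖+1) * (‖a‖+1)) with hηdef
  have hη : 0 < η := by positivity
  set Ha := cfcₙ (rmp (6*η) (7*η)) a with hHa
  have hnHa : ‖Ha‖ ≤ 1 := norm_cfcₙ_le fun t _ => by
    rw [Real.norm_eq_abs]; exact abs_rmp_le_one _ _ t
  obtain ⟨hul, hur⟩ := cfc_unit_err ha0 hη
  rw [← hHa] at hul hur
  have hdist : ‖x - a * m * a‖ < ε/3 := by rwa [dist_eq_norm] at hyd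
  have n1 : ‖(Ha * a - a) * (m * (a * Ha))‖ ≤ (7*η) * (‖m‖ * ‖a‖) := by
    refine le_trans (norm_mul_le _ _) ?_
    refine mul_le_mul hul ?_ (norm_nonneg _) (by positivity)
    refine le_trans (norm_mul_le _ _) ?_
    refine mul_le_mul_of_nonneg_left ?_ hC0
    calc ‖a * Ha‖ ≤ ‖a‖ * ‖Ha‖ := norm_mul_le _ _
      _ ≤ ‖a‖ * 1 := mul_le_mul_of_nonneg_left hnHa hD0
      _ = ‖a‖ := mul_one _
  have n2 : ‖a * m * (a * Ha - a)‖ ≤ (‖a‖ * ‖m‖) * (7*η) := by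
    refine le_trans (norm_mul_le _ _) ?_
    exact mul_le_mul (norm_mul_le _ _) hur (norm_nonneg _) (by positivity)
  have hmid : ‖Ha * (a * m * a) * Ha - a * m * a‖ ≤ ε/3 := by
    have hdecomp : Ha * (a * m * a) * Ha - a * m * a
        = (Ha * a - a) * (m * (a * Ha)) + a * m * (a * Ha - a) := by noncomm_ring
    rw [hdecomp]
    refine le_trans (norm_add_le _ _) ?_
    have harith : (7*η) * (‖m‖ * ‖a‖) + (‖a‖ * ‖m‖) * (7*η) ≤ ε/3 := by
      have hden : (0:ℝ) < 42 * (‖m‖+1) * (‖a‖+1) := by positivity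
      have hη_eq : η * (42 * (‖m‖+1) * (‖a‖+1)) = ε := by
        rw [hηdef]; field_simp
      nlinarith [mul_nonneg hη.le hC0, mul_nonneg hη.le hD0, hη.le,
        mul_nonneg (mul_nonneg hη.le hC0) hD0]
    linarith
  have n3 : ‖Ha * (x - a * m * a) * Ha‖ < ε/3 := by
    calc ‖Ha * (x - a * m * a) * Ha‖ ≤ ‖Ha‖ * ‖x - a * m * a‖ * ‖Ha‖ := norm_mul3_le _ _ _
      _ ≤ 1 * ‖x - a * m * a‖ * 1 := by gcongr <;> exact hnHa
      _ = ‖x - a * m * a‖ := by ring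
      _ < ε/3 := hdist
  have hsplit : Ha * x * Ha - x
      = Ha * (x - a * m * a) * Ha + (Ha * (a * m * a) * Ha - a * m * a)
        + (a * m * a - x) := by noncomm_ring
  rw [hsplit]
  have n4 : ‖a * m * a - x‖ < ε/3 := by rw [norm_sub_rev]; exact hdist
  have n5 : ‖Ha * (x - a * m * a) * Ha + (Ha * (a * m * a) * Ha - a * m * a)
        + (a * m * a - x)‖
      ≤ ‖Ha * (x - a * m * a) * Ha‖ + ‖Ha * (a * m * a) * Ha - a * m * a‖
        + ‖a * m * a - x‖ := norm_add₃_le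
  linarith

end OrderAux

end RRZAux

open scoped CStarAlgebra in
set_option maxHeartbeats 4000000 in
theorem stmt8 {A B : Type*} [NonUnitalCStarAlgebra A] [NonUnitalCStarAlgebra B]
    [PartialOrder B] [StarOrderedRing B] {ι : Type*} (l : Filter ι) [l.NeBot]
    (θi : ι → (A →⋆ₙₐ[ℂ] B)) (θ : A →⋆ₙₐ[ℂ] B)
    (hrr : ∀ i, StarHomRealRankZero (θi i))
    (hconv : ∀ a : A, Tendsto (fun i => θi i a) l (nhds (θ a))) :
    StarHomRealRankZero θ := by
  have hθcont : ∀ (ψ : A →⋆ₙₐ[ℂ] B), Continuous ψ := fun ψ => map_continuous ψ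
  intro a ha_rng ha0 hane x hx_mem hx0 ε hε
  obtain ⟨c, hc⟩ := ha_rng
  have ha_sa : IsSelfAdjoint a := IsSelfAdjoint.of_nonneg ha0
  rcases lt_or_ge ‖x‖ ε with hX | hX
  · exact ⟨0, her_zero_mem a, ⟨star_zero B, mul_zero 0⟩, by simpa using hX⟩
  have hX0 : (0:ℝ) < ‖x‖ := lt_of_lt_of_le hε hX
  -- a selfadjoint preimage of `a`
  set c₁ : A := (2⁻¹ : ℂ) • (c + star c) with hc₁def
  have hc₁_sa : IsSelfAdjoint c₁ := by
    rw [hc₁def]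
    have h2 : IsSelfAdjoint (2⁻¹ : ℂ) := by
      rw [IsSelfAdjoint, star_inv₀, star_ofNat]
    exact h2.smul (IsSelfAdjoint.add_star_self c)
  have hθc₁ : θ c₁ = a := by
    rw [hc₁def, map_smul, map_add, map_star, hc, ha_sa.star_eq, ← two_smul ℂ a, smul_smul]
    norm_num
  -- parameters
  set ρ : ℝ := min (ε / (8 * (‖x‖ + 1))) 8⁻¹ with hρdef
  have hρ : 0 < ρ := lt_min (by positivity) (by norm_num)
  have hρ8 : ρ ≤ 8⁻¹ := min_le_right _ _
  have hρ1 : ρ ≤ 1 := le_trans hρ8 (by norm_num)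
  have hρx : ρ ≤ ε / (8 * (‖x‖ + 1)) := min_le_left _ _
  set δ₂ : ℝ := ρ^2/4 with hδ₂def
  have hδ₂ : 0 < δ₂ := by positivity
  -- approximate unit cut level
  obtain ⟨η, hη, hAU⟩ := approx_unit ha0 hx_mem (ε := ε/8) (by positivity)
  set hfun : ℝ → ℝ := rmp (6*η) (7*η) with hhfun
  set ffun : ℝ → ℝ := fun t => max (t - 5*η) 0 with hffun
  set rfun : ℝ → ℝ := rmp η (2*η) with hrfun
  have hfc : Continuous hfun := rmp_continuous _ _
  have hf0 : hfun 0 = 0 := rmp_zero (by linarith) (by linarith)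
  have hffc : Continuous ffun := (continuous_id.sub continuous_const).max continuous_const
  have hff0 : ffun 0 = 0 := by
    rw [hffun]
    exact max_eq_right (by linarith)
  have hrc : Continuous rfun := rmp_continuous _ _
  have hr0 : rfun 0 = 0 := rmp_zero (le_of_lt hη) (by linarith)
  -- continuity of the functional calculus at `a`
  obtain ⟨δa, hδa, hCLh⟩ := cfcn_close ha_sa hfun hfc hf0 (ε := ε/(32*(‖x‖+1)))
    (by positivity)
  obtain ⟨δb, hδb, hCLr⟩ := cfcn_close ha_sa rfun hrc hr0 (ε := δ₂/2) (by positivity)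
  -- choose an index
  obtain ⟨i, hi⟩ := (Metric.tendsto_nhds.mp (hconv c₁) (min δa δb) (lt_min hδa hδb)).exists
  rw [dist_eq_norm, hθc₁] at hi
  set s : B := θi i c₁ with hsdef
  have hs_sa : IsSelfAdjoint s := hc₁_sa.map (θi i)
  have hsa_d : ‖s - a‖ < δa := lt_of_lt_of_le hi (min_le_left _ _)
  have hsb_d : ‖s - a‖ < δb := lt_of_lt_of_le hi (min_le_right _ _)
  -- the cut-down of x into her(b)
  set Hs : B := cfcₙ hfun s with hHs
  set Ha : B := cfcₙ hfun a with hHaa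
  have hHs_sa : IsSelfAdjoint Hs := cfcₙ_predicate hfun s
  have hHsn : ‖Hs‖ ≤ 1 := norm_cfcₙ_le fun t _ => by
    rw [Real.norm_eq_abs, hhfun]; exact abs_rmp_le_one _ _ t
  have hHan : ‖Ha‖ ≤ 1 := norm_cfcₙ_le fun t _ => by
    rw [Real.norm_eq_abs, hhfun]; exact abs_rmp_le_one _ _ t
  have hHsHa : ‖Hs - Ha‖ < ε/(32*(‖x‖+1)) := hCLh s hs_sa hsa_d
  set x' : B := Hs * x * Hs with hx'def
  have hx'x : ‖x' - x‖ < ε/4 := by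
    have hd : x' - x = (Hs - Ha) * x * Hs + Ha * x * (Hs - Ha) + (Ha * x * Ha - x) := by
      rw [hx'def]; noncomm_ring
    have e1 : ‖(Hs - Ha) * x * Hs‖ ≤ ‖Hs - Ha‖ * ‖x‖ * 1 := by
      calc ‖(Hs - Ha) * x * Hs‖ ≤ ‖Hs - Ha‖ * ‖x‖ * ‖Hs‖ := norm_mul3_le _ _ _
        _ ≤ ‖Hs - Ha‖ * ‖x‖ * 1 := by gcongr
    have e2 : ‖Ha * x * (Hs - Ha)‖ ≤ 1 * ‖x‖ * ‖Hs - Ha‖ := by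
      calc ‖Ha * x * (Hs - Ha)‖ ≤ ‖Ha‖ * ‖x‖ * ‖Hs - Ha‖ := norm_mul3_le _ _ _
        _ ≤ 1 * ‖x‖ * ‖Hs - Ha‖ := by gcongr
    have e0 : ‖Hs - Ha‖ * ‖x‖ ≤ ε/32 := by
      have h32 : ‖Hs - Ha‖ * (‖x‖+1) ≤ (ε/(32*(‖x‖+1))) * (‖x‖+1) :=
        mul_le_mul_of_nonneg_right hHsHa.le (by positivity)
      have h33 : (ε/(32*(‖x‖+1))) * (‖x‖+1) = ε/32 := by field_simp
      nlinarith [norm_nonneg (Hs - Ha)]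
    have e3 : ‖(Hs - Ha) * x * Hs + Ha * x * (Hs - Ha) + (Ha * x * Ha - x)‖
        ≤ ‖(Hs - Ha) * x * Hs‖ + ‖Ha * x * (Hs - Ha)‖ + ‖Ha * x * Ha - x‖ := norm_add₃_le
    rw [hd]
    have := hAU
    linarith
  -- the positive element b of range (θi i)
  set b : B := cfcₙ ffun s with hbdef
  have hb0 : 0 ≤ b := cfcₙ_nonneg fun t _ => le_max_right _ _
  have hb_rng : b ∈ Set.range (θi i) := by
    refine ⟨cfcₙ ffun c₁, ?_⟩
    rw [NonUnitalStarAlgHom.map_cfcₙ (θi i) ffun c₁ hffc.continuousOn hff0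
      (hθcont (θi i)) hc₁_sa hs_sa]
  -- x' belongs to her(b)
  set hhat : ℝ → ℝ := fun t => hfun t * (max (t - 5*η) η)⁻¹ with hhhat
  have hhatc : Continuous hhat := by
    rw [hhhat]
    exact hfc.mul (Continuous.inv₀ ((continuous_id.sub continuous_const).max continuous_const)
      fun t => ne_of_gt (lt_of_lt_of_le hη (le_max_right _ _)))
  have hhat0 : hhat 0 = 0 := by rw [hhhat]; simp [hf0]
  have hid2 : ∀ t : ℝ, ffun t * hhat t = hfun t := by
    intro t
    rcases le_or_gt t (6*η) with h | h
    · have h1 : hfun t = 0 := by rw [hhfun]; exact rmp_eq_zero (by linarith) h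
      rw [hhhat]
      simp [h1]
    · have h2 : max (t - 5*η) η = t - 5*η := max_eq_left (by linarith)
      have h3 : ffun t = t - 5*η := max_eq_left (by linarith)
      have h4 : t - 5*η ≠ 0 := ne_of_gt (by linarith)
      rw [hhhat, h3]
      dsimp only
      rw [h2]
      field_simp
  have hid2' : ∀ t : ℝ, hhat t * ffun t = hfun t := fun t => by rw [mul_comm]; exact hid2 t
  set Es : B := cfcₙ hhat s with hEs
  have hHs_fact1 : b * Es = Hs := by
    rw [hbdef, hEs, hHs,
      ← cfcₙ_mul ffun hhat s hffc.continuousOn hff0 hhatc.continuousOn hhat0]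
    exact cfcₙ_congr fun t _ => hid2 t
  have hHs_fact2 : Es * b = Hs := by
    rw [hbdef, hEs, hHs,
      ← cfcₙ_mul hhat ffun s hhatc.continuousOn hhat0 hffc.continuousOn hff0]
    exact cfcₙ_congr fun t _ => hid2' t
  have hx'b : x' = b * (Es * x * Es) * b := by
    have h1 : x' = (b * Es) * x * (Es * b) := by rw [hHs_fact1, hHs_fact2, hx'def]
    rw [h1]; noncomm_ring
  have hx'mem : x' ∈ herSub (Set.univ : Set B) b := by
    rw [hx'b]; exact her_mem b _
  have hx'0 : 0 ≤ x' := by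
    have h := star_left_conjugate_nonneg hx0 Hs
    rw [hHs_sa.star_eq] at h
    exact hx'def ▸ h
  have hbne : b ≠ 0 := by
    intro hb
    have h0' : x' = 0 := by rw [hx'b, hb]; simp
    rw [h0', zero_sub, norm_neg] at hx'x
    linarith
  -- apply real rank zero of θi i
  obtain ⟨p, hp_mem, ⟨hp_star, hp_idem⟩, hp_x'⟩ :=
    hrr i b hb_rng hb0 hbne x' hx'mem hx'0 (ε/8) (by positivity)
  have hpn : ‖p‖ ≤ 1 := by
    have h1 : ‖p‖ * ‖p‖ = ‖p‖ := by
      calc ‖p‖ * ‖p‖ = ‖star p * p‖ := (CStarRing.norm_star_mul_self).symm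
        _ = ‖p‖ := by rw [hp_star, hp_idem]
    nlinarith [norm_nonneg p]
  have hpx : ‖p * x - x‖ < 5*ε/8 := by
    have hd : p * x - x = p * (x - x') + (p * x' - x') + (x' - x) := by noncomm_ring
    have e1 : ‖p * (x - x')‖ ≤ 1 * ‖x - x'‖ :=
      le_trans (norm_mul_le _ _) (by gcongr)
    have e5 : ‖x - x'‖ < ε/4 := by rw [norm_sub_rev]; exact hx'x
    have e6 : ‖p * (x - x') + (p * x' - x') + (x' - x)‖
        ≤ ‖p * (x - x')‖ + ‖p * x' - x'‖ + ‖x' - x‖ := norm_add₃_le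
    rw [hd]
    linarith
  -- p is fixed by Rs
  set Rs : B := cfcₙ rfun s with hRs
  have hid1 : ∀ t : ℝ, rfun t * ffun t = ffun t := by
    intro t
    rcases le_or_gt t (5*η) with h | h
    · have h1 : ffun t = 0 := max_eq_right (by linarith)
      rw [h1, mul_zero]
    · have h1 : rfun t = 1 := by rw [hrfun]; exact rmp_eq_one (by linarith) (by linarith)
      rw [h1, one_mul]
  have hid1' : ∀ t : ℝ, ffun t * rfun t = ffun t := fun t => by rw [mul_comm]; exact hid1 t
  have hRsb : Rs * b = b := by
    rw [hRs, hbdef, ← cfcₙ_mul rfun ffun s hrc.continuousOn hr0 hffc.continuousOn hff0]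
    exact cfcₙ_congr fun t _ => hid1 t
  have hbRs : b * Rs = b := by
    rw [hRs, hbdef, ← cfcₙ_mul ffun rfun s hffc.continuousOn hff0 hrc.continuousOn hr0]
    exact cfcₙ_congr fun t _ => hid1' t
  have hp_fix : Rs * p * Rs = p := by
    obtain ⟨u, huS, hulim⟩ := her_seq hp_mem
    have hfix : ∀ n, Rs * u n * Rs = u n := by
      intro n; obtain ⟨m, hm⟩ := huS n
      rw [hm]
      calc Rs * (b * m * b) * Rs = (Rs * b) * m * (b * Rs) := by noncomm_ring
        _ = b * m * b := by rw [hRsb, hbRs]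
    have t1 : Tendsto (fun n => Rs * u n * Rs) atTop (nhds (Rs * p * Rs)) :=
      (tendsto_const_nhds.mul hulim).mul tendsto_const_nhds
    rw [funext hfix] at t1
    exact tendsto_nhds_unique t1 hulim
  -- move p close to her(a)
  set Ra : B := cfcₙ rfun a with hRa
  have hRa_sa : IsSelfAdjoint Ra := cfcₙ_predicate rfun a
  have hRan : ‖Ra‖ ≤ 1 := norm_cfcₙ_le fun t _ => by
    rw [Real.norm_eq_abs, hrfun]; exact abs_rmp_le_one _ _ t
  have hRsn : ‖Rs‖ ≤ 1 := norm_cfcₙ_le fun t _ => by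
    rw [Real.norm_eq_abs, hrfun]; exact abs_rmp_le_one _ _ t
  have hRaRs : ‖Ra - Rs‖ < δ₂/2 := by
    rw [norm_sub_rev]; exact hCLr s hs_sa hsb_d
  set W : B := Ra * p * Ra with hW
  have hW_sa : IsSelfAdjoint W := by
    have : star W = W := by
      rw [hW, star_mul, star_mul, hRa_sa.star_eq, hp_star, mul_assoc]
    exact this
  have hW_mem : W ∈ herSub (Set.univ : Set B) a := by
    set rhat : ℝ → ℝ := fun t => rfun t * (max t η)⁻¹ with hrhat
    have hrhatc : Continuous rhat := by
      rw [hrhat]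
      exact hrc.mul (Continuous.inv₀ (continuous_id.max continuous_const)
        fun t => ne_of_gt (lt_of_lt_of_le hη (le_max_right _ _)))
    have hrhat0 : rhat 0 = 0 := by rw [hrhat]; simp [hr0]
    have hid3 : ∀ t : ℝ, t * rhat t = rfun t := by
      intro t
      rcases le_or_gt t η with h | h
      · have h1 : rfun t = 0 := by rw [hrfun]; exact rmp_eq_zero (by linarith) h
        rw [hrhat]
        simp [h1]
      · have h2 : max t η = t := max_eq_left (le_of_lt h)
        have h4 : t ≠ 0 := ne_of_gt (lt_trans hη h)
        rw [hrhat]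
        dsimp only
        rw [h2]
        field_simp
    have hid3' : ∀ t : ℝ, rhat t * t = rfun t := fun t => by rw [mul_comm]; exact hid3 t
    set Ea : B := cfcₙ rhat a with hEa
    have hfact1 : a * Ea = Ra := by
      have h5 := cfcₙ_mul (fun t : ℝ => t) rhat a continuous_id.continuousOn rfl
        hrhatc.continuousOn hrhat0
      rw [cfcₙ_id' ℝ a ha_sa] at h5
      rw [hEa, ← h5, hRa]
      exact cfcₙ_congr fun t _ => hid3 t
    have hfact2 : Ea * a = Ra := by
      have h5 := cfcₙ_mul rhat (fun t : ℝ => t) a hrhatc.continuousOn hrhat0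
        continuous_id.continuousOn rfl
      rw [cfcₙ_id' ℝ a ha_sa] at h5
      rw [hEa, ← h5, hRa]
      exact cfcₙ_congr fun t _ => hid3' t
    have hWa : W = a * (Ea * p * Ea) * a := by
      have h1 : W = (a * Ea) * p * (Ea * a) := by rw [hfact1, hfact2, hW]
      rw [h1]; noncomm_ring
    rw [hWa]; exact her_mem a _
  have hWp : ‖W - p‖ ≤ δ₂ := by
    have hd : W - Rs * p * Rs = (Ra - Rs) * p * Ra + Rs * p * (Ra - Rs) := by
      rw [hW]; noncomm_ring
    rw [hp_fix] at hd
    have e1 : ‖(Ra - Rs) * p * Ra‖ ≤ ‖Ra - Rs‖ * 1 * 1 := by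
      calc ‖(Ra - Rs) * p * Ra‖ ≤ ‖Ra - Rs‖ * ‖p‖ * ‖Ra‖ := norm_mul3_le _ _ _
        _ ≤ ‖Ra - Rs‖ * 1 * 1 := by gcongr
    have e2 : ‖Rs * p * (Ra - Rs)‖ ≤ 1 * 1 * ‖Ra - Rs‖ := by
      calc ‖Rs * p * (Ra - Rs)‖ ≤ ‖Rs‖ * ‖p‖ * ‖Ra - Rs‖ := norm_mul3_le _ _ _
        _ ≤ 1 * 1 * ‖Ra - Rs‖ := by gcongr
    rw [hd]
    have e3 : ‖(Ra - Rs) * p * Ra + Rs * p * (Ra - Rs)‖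
        ≤ ‖(Ra - Rs) * p * Ra‖ + ‖Rs * p * (Ra - Rs)‖ := norm_add_le _ _
    linarith
  -- the spectral projection
  set χfun : ℝ → ℝ := rmp (1/4) (3/4) with hχ
  have hχc : Continuous χfun := rmp_continuous _ _
  have hχ0 : χfun 0 = 0 := rmp_zero (by norm_num) (by norm_num)
  set q : B := cfcₙ χfun W with hq
  have hq_mem : q ∈ herSub (Set.univ : Set B) a := cfcn_mem_her hW_sa hW_mem χfun hχc hχ0
  have hspec : ∀ t ∈ quasispectrum ℝ W, |t| ≤ ρ ∨ |t - 1| ≤ ρ :=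
    proj_spec hp_star hp_idem hpn hρ hρ1 (by rw [← hδ₂def]; exact hWp)
  have hq_sa : IsSelfAdjoint q := cfcₙ_predicate χfun W
  have hχval : ∀ t ∈ quasispectrum ℝ W, χfun t = 0 ∨ χfun t = 1 := by
    intro t ht
    rcases hspec t ht with h | h
    · left
      have h6 := abs_le.mp h
      rw [hχ]
      exact rmp_eq_zero (by norm_num) (by nlinarith [h6.2])
    · right
      have h6 := abs_le.mp h
      rw [hχ]
      exact rmp_eq_one (by norm_num) (by nlinarith [h6.1])
  have hq_idem : q * q = q := by
    rw [hq, ← cfcₙ_mul χfun χfun W hχc.continuousOn hχ0 hχc.continuousOn hχ0]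
    exact cfcₙ_congr fun t ht => by
      rcases hχval t ht with h | h <;> rw [h] <;> norm_num
  have hqW : ‖q - W‖ ≤ ρ := by
    have h5 := cfcₙ_sub χfun (fun t : ℝ => t) W hχc.continuousOn hχ0
      continuous_id.continuousOn rfl
    rw [cfcₙ_id' ℝ W hW_sa] at h5
    rw [hq, ← h5]
    refine norm_cfcₙ_le fun t ht => ?_
    rw [Real.norm_eq_abs]
    rcases hχval t ht with h | h <;> rcases hspec t ht with h7 | h7
    · rw [h]
      rw [abs_sub_comm]
      simpa using h7
    · exfalso
      have h6 := abs_le.mp h7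
      have h8 : χfun t = 1 := by
        rw [hχ]; exact rmp_eq_one (by norm_num) (by nlinarith [h6.1])
      rw [h] at h8; norm_num at h8
    · exfalso
      have h6 := abs_le.mp h7
      have h8 : χfun t = 0 := by
        rw [hχ]; exact rmp_eq_zero (by norm_num) (by nlinarith [h6.2])
      rw [h] at h8; norm_num at h8
    · rw [h]
      rw [abs_sub_comm]
      exact h7
  have hqp : ‖q - p‖ ≤ 2*ρ := by
    have hd : q - p = (q - W) + (W - p) := by abel
    rw [hd]
    calc ‖(q - W) + (W - p)‖ ≤ ‖q - W‖ + ‖W - p‖ := norm_add_le _ _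
      _ ≤ ρ + δ₂ := add_le_add hqW hWp
      _ ≤ 2*ρ := by nlinarith
  refine ⟨q, hq_mem, ⟨hq_sa.star_eq, hq_idem⟩, ?_⟩
  have hfin : q * x - x = (q - p) * x + (p * x - x) := by noncomm_ring
  rw [hfin]
  have e1 : ‖(q - p) * x‖ ≤ 2*ρ*‖x‖ :=
    le_trans (norm_mul_le _ _) (mul_le_mul_of_nonneg_right hqp (norm_nonneg x))
  have e2 : 2*ρ*‖x‖ ≤ ε/4 := by
    have h9 : ρ * (‖x‖+1) ≤ ε/8 := by
      calc ρ * (‖x‖+1) ≤ (ε/(8*(‖x‖+1))) * (‖x‖+1) :=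
            mul_le_mul_of_nonneg_right hρx (by positivity)
        _ = ε/8 := by field_simp
    have h10 : ρ * ‖x‖ ≤ ρ * (‖x‖+1) :=
      mul_le_mul_of_nonneg_left (by linarith) hρ.le
    linarith
  calc ‖(q - p) * x + (p * x - x)‖ ≤ ‖(q - p) * x‖ + ‖p * x - x‖ := norm_add_le _ _
    _ < ε := by linarith
end

section
/- Let A, B, C be C*-algebras and let φ : C → B and ψ : A → C be *-homomorphisms. If at least one of φ and ψ has real rank zero, then the composition φ ∘ ψ : A → B has real rank zero. -/
open Filter Topology

section Aux

open scoped CStarAlgebra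

variable {B : Type*} [NonUnitalCStarAlgebra B]

lemma aux_proj_norm_le_one {p : B} (hp : IsProjection p) : ‖p‖ ≤ 1 := by
  have h := CStarRing.norm_star_mul_self (x := p)
  rw [hp.1, hp.2] at h
  nlinarith [norm_nonneg p]

/-- Key estimate: for a projection `p` and self-adjoint `s`,
`‖p*s - s‖² ≤ 2 ‖p*(s*s) - s*s‖`. -/
lemma aux_sq_est {p s : B} (hp : IsProjection p) (hs : star s = s) :
    ‖p * s - s‖ ^ 2 ≤ 2 * ‖p * (s * s) - s * s‖ := by
  set y := p * s - s with hy
  have hstary : star y = s * p - s := by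
    rw [hy, star_sub, star_mul, hp.1, hs]
  have hprod : y * star y = p * ((s * s) * p - s * s) - ((s * s) * p - s * s) := by
    rw [hy, hstary]; noncomm_ring
  have h1 : ‖y‖ ^ 2 = ‖y * star y‖ := by
    rw [CStarRing.norm_self_mul_star]; ring
  have h2 : ‖(s * s) * p - s * s‖ = ‖p * (s * s) - s * s‖ := by
    rw [← norm_star, star_sub, star_mul, hp.1, star_mul, hs]
  calc ‖y‖ ^ 2 = ‖y * star y‖ := h1
    _ = ‖p * ((s * s) * p - s * s) - ((s * s) * p - s * s)‖ := by rw [hprod]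
    _ ≤ ‖p * ((s * s) * p - s * s)‖ + ‖(s * s) * p - s * s‖ := norm_sub_le _ _
    _ ≤ ‖p‖ * ‖(s * s) * p - s * s‖ + ‖(s * s) * p - s * s‖ := by
        gcongr; exact norm_mul_le _ _
    _ ≤ 1 * ‖(s * s) * p - s * s‖ + ‖(s * s) * p - s * s‖ := by
        gcongr; exact aux_proj_norm_le_one hp
    _ = 2 * ‖p * (s * s) - s * s‖ := by rw [h2]; ring

lemma aux_step {p s : B} (hp : IsProjection p) (hs : star s = s) {η : ℝ} (hη : 0 < η)
    (h : ‖p * (s * s) - s * s‖ < η ^ 2 / 2) : ‖p * s - s‖ < η := by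
  have h1 := aux_sq_est hp hs
  nlinarith [norm_nonneg (p * s - s)]

end Aux

theorem stmt9 {A B C : Type*} [NonUnitalCStarAlgebra A] [NonUnitalCStarAlgebra B]
    [NonUnitalCStarAlgebra C] [PartialOrder B] [StarOrderedRing B]
    [PartialOrder C] [StarOrderedRing C]
    (φ : C →⋆ₙₐ[ℂ] B) (ψ : A →⋆ₙₐ[ℂ] C)
    (h : StarHomRealRankZero φ ∨ StarHomRealRankZero ψ) :
    StarHomRealRankZero (φ.comp ψ) := by
  open scoped CStarAlgebra in
  rcases h with hφ | hψ
  · -- φ has real rank zero: range (φ ∘ ψ) ⊆ range φ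
    intro a ha ha0 hane
    obtain ⟨t, ht⟩ := ha
    exact hφ a ⟨ψ t, ht⟩ ha0 hane
  · -- ψ has real rank zero
    intro a ha ha0 hane
    obtain ⟨t, ht⟩ := ha
    have hsa : star a = a := (IsSelfAdjoint.of_nonneg ha0)
    set c : C := ψ t with hc
    have hφc : φ c = a := ht
    set d : C := star c * c with hd
    have hdr : d ∈ Set.range ψ := ⟨star t * t, by simp [hd, hc, map_mul, map_star]⟩
    have hd0 : (0 : C) ≤ d := star_mul_self_nonneg c
    have hφd : φ d = a * a := by rw [hd, map_mul, map_star, hφc, hsa]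
    have hdne : d ≠ 0 := by
      intro hdz
      have : a * a = 0 := by rw [← hφd, hdz, map_zero]
      have hna : ‖a‖ * ‖a‖ = 0 := by
        rw [← CStarRing.norm_star_mul_self (x := a), hsa, this, norm_zero]
      exact hane (norm_eq_zero.mp (by nlinarith [norm_nonneg a]))
    have hsd : star d = d := by rw [hd, star_mul, star_star]
    have hAU := hψ d hdr hd0 hdne
    -- the element d*d*d lies in herSub univ d and is nonneg
    have hddd_mem : d * d * d ∈ herSub (Set.univ : Set C) d :=
      subset_closure ⟨d, Set.mem_univ d, rfl⟩
    have hddd0 : (0 : C) ≤ d * d * d := by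
      have := star_left_conjugate_nonneg hd0 d
      rwa [hsd] at this
    -- approximation target
    intro x hx hx0 ε hε
    obtain ⟨y, hyS, hyd⟩ := Metric.mem_closure_iff.mp hx (ε / 3) (by linarith)
    obtain ⟨b, -, hyb⟩ := hyS
    rw [dist_eq_norm] at hyd
    -- choice of tolerances
    set η : ℝ := (ε / 3) / (‖b‖ * ‖a‖ + 1) with hηdef
    have hbapos : (0 : ℝ) < ‖b‖ * ‖a‖ + 1 := by positivity
    have hη : 0 < η := by positivity
    set η₂ : ℝ := η ^ 2 / 2 with hη₂def
    have hη₂ : 0 < η₂ := by positivity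
    set η₄ : ℝ := η₂ ^ 2 / 2 with hη₄def
    have hη₄ : 0 < η₄ := by positivity
    set η₃ : ℝ := η₄ / (‖a‖ + 1) with hη₃def
    have hapos : (0 : ℝ) < ‖a‖ + 1 := by positivity
    have hη₃ : 0 < η₃ := by positivity
    set η₆ : ℝ := η₃ ^ 2 / 2 with hη₆def
    have hη₆ : 0 < η₆ := by positivity
    obtain ⟨q, hqmem, hqproj, hqest⟩ := hAU (d * d * d) hddd_mem hddd0 η₆ hη₆
    set p : B := φ q with hpdef
    have hpproj : IsProjection p := by
      constructor
      · rw [hpdef, ← map_star, hqproj.1]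
      · rw [hpdef, ← map_mul, hqproj.2]
    -- p belongs to herSub univ a
    have hpmem : p ∈ herSub (Set.univ : Set B) a := by
      have hcont : Continuous φ := map_continuous φ
      have h1 : p ∈ φ '' closure {x : C | ∃ b ∈ (Set.univ : Set C), x = d * b * d} :=
        ⟨q, hqmem, rfl⟩
      have h2 : φ '' closure {x : C | ∃ b ∈ (Set.univ : Set C), x = d * b * d} ⊆
          closure (φ '' {x : C | ∃ b ∈ (Set.univ : Set C), x = d * b * d}) :=
        image_closure_subset_closure_image hcont
      refine closure_mono ?_ (h2 h1)
      rintro z ⟨w, ⟨e, -, rfl⟩, rfl⟩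
      refine ⟨a * φ e * a, Set.mem_univ _, ?_⟩
      rw [map_mul, map_mul, hφd]
      noncomm_ring
    -- the ladder of estimates
    have hφddd : φ (d * d * d) = (a * a * a) * (a * a * a) := by
      rw [map_mul, map_mul, hφd]; noncomm_ring
    have hs3 : star (a * a * a) = a * a * a := by
      simp only [star_mul, hsa]; noncomm_ring
    have h6 : ‖p * ((a * a * a) * (a * a * a)) - (a * a * a) * (a * a * a)‖ < η₆ := by
      calc ‖p * ((a * a * a) * (a * a * a)) - (a * a * a) * (a * a * a)‖
          = ‖φ (q * (d * d * d) - d * d * d)‖ := by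
            rw [map_sub, map_mul, hφddd, hpdef]
        _ ≤ ‖q * (d * d * d) - d * d * d‖ := NonUnitalStarAlgHom.norm_apply_le φ _
        _ < η₆ := hqest
    have h3 : ‖p * (a * a * a) - a * a * a‖ < η₃ := aux_step hpproj hs3 hη₃ h6
    have h4 : ‖p * ((a * a) * (a * a)) - (a * a) * (a * a)‖ < η₄ := by
      have heq : p * ((a * a) * (a * a)) - (a * a) * (a * a)
          = (p * (a * a * a) - a * a * a) * a := by noncomm_ring
      calc ‖p * ((a * a) * (a * a)) - (a * a) * (a * a)‖
          = ‖(p * (a * a * a) - a * a * a) * a‖ := by rw [heq]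
        _ ≤ ‖p * (a * a * a) - a * a * a‖ * ‖a‖ := norm_mul_le _ _
        _ ≤ η₃ * ‖a‖ := mul_le_mul_of_nonneg_right h3.le (norm_nonneg a)
        _ < η₃ * (‖a‖ + 1) := (mul_lt_mul_iff_right₀ hη₃).mpr (lt_add_one _)
        _ = η₄ := by rw [hη₃def, div_mul_cancel₀ _ (ne_of_gt hapos)]
    have hs2 : star (a * a) = a * a := by rw [star_mul, hsa]
    have h2 : ‖p * (a * a) - a * a‖ < η₂ := aux_step hpproj hs2 hη₂ h4
    have h1 : ‖p * a - a‖ < η := aux_step hpproj hsa hη h2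
    -- final assembly
    refine ⟨p, hpmem, hpproj, ?_⟩
    rw [hyb] at hyd
    have hsplit : p * x - x
        = p * (x - a * b * a) + (p * a - a) * (b * a) + (a * b * a - x) := by
      noncomm_ring
    have n0 : ‖p * x - x‖
        ≤ ‖p * (x - a * b * a)‖ + ‖(p * a - a) * (b * a)‖ + ‖a * b * a - x‖ := by
      rw [hsplit]; exact norm_add₃_le
    have n1 : ‖p * (x - a * b * a)‖ ≤ ‖x - a * b * a‖ := by
      calc ‖p * (x - a * b * a)‖ ≤ ‖p‖ * ‖x - a * b * a‖ := norm_mul_le _ _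
        _ ≤ 1 * ‖x - a * b * a‖ :=
            mul_le_mul_of_nonneg_right (aux_proj_norm_le_one hpproj) (norm_nonneg _)
        _ = ‖x - a * b * a‖ := one_mul _
    have n2 : ‖(p * a - a) * (b * a)‖ ≤ ‖p * a - a‖ * (‖b‖ * ‖a‖) := by
      calc ‖(p * a - a) * (b * a)‖ ≤ ‖p * a - a‖ * ‖b * a‖ := norm_mul_le _ _
        _ ≤ ‖p * a - a‖ * (‖b‖ * ‖a‖) :=
            mul_le_mul_of_nonneg_left (norm_mul_le _ _) (norm_nonneg _)
    have hmul : η * (‖b‖ * ‖a‖ + 1) = ε / 3 := div_mul_cancel₀ _ (ne_of_gt hbapos)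
    have n3a : ‖p * a - a‖ * (‖b‖ * ‖a‖) ≤ η * (‖b‖ * ‖a‖) :=
      mul_le_mul_of_nonneg_right h1.le (mul_nonneg (norm_nonneg b) (norm_nonneg a))
    have n3b : η * (‖b‖ * ‖a‖) < η * (‖b‖ * ‖a‖ + 1) :=
      (mul_lt_mul_iff_right₀ hη).mpr (lt_add_one _)
    have n3 : ‖p * a - a‖ * (‖b‖ * ‖a‖) < ε / 3 := by
      rw [← hmul]; exact n3a.trans_lt n3b
    have hx3 : ‖a * b * a - x‖ < ε / 3 := by rw [norm_sub_rev]; exact hyd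
    linarith
end

section
/- Let X and Y be compact Hausdorff spaces and let φ : Y → X be a continuous surjection, so that the induced unital *-homomorphism φ* : C(X) → C(Y), f ↦ f ∘ φ, is injective and gives an inclusion φ*(C(X)) ⊆ C(Y) of commutative unital C*-algebras. Then the inclusion φ*(C(X)) ⊆ C(Y) has real rank zero if and only if there exists a closed unital *-subalgebra D of C(Y) with φ*(C(X)) ⊆ D ⊆ C(Y) whose Gelfand spectrum (character space) is totally disconnected. -/
open Filter Topology
open scoped ComplexOrder

/-!
Characters of a closed unital *-subalgebra `D ⊆ C(Y)` are point evaluations: by Gelfand duality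
an injective morphism of commutative C*-algebras induces a surjection of character spaces.

(⇒) Take for `D` the C*-algebra generated by `φ*C(X)` and all projections of `C(Y)`. If
`φ y₁ ≠ φ y₂`, real rank zero applied to a Urysohn function `u ∘ φ` gives a projection that is
close to `1` where `u ∘ φ = 1` and vanishes where `u ∘ φ = 0`. Hence projections of `D` separate
the characters of `D`, and characters separated by idempotents lie in complementary clopen sets.

(⇐) In `C(Y)`, `cl(a C(Y) a)` consists of the functions vanishing on the zero set of `a`. For
`x` in it, the compact set `{|x| ≥ ε}` maps into the open set of characters of `D` not killing
`a`; a clopen set in between pulls back to a clopen `U ⊆ Y`, and `1_U` is the projection.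
-/

open WeakDual

namespace WeakDual.CharacterSpace

theorem compContinuousMap_surjective {A B : Type*} [CommCStarAlgebra A] [CommCStarAlgebra B]
    (ψ : A →⋆ₐ[ℂ] B) (hψ : Function.Injective ψ) :
    Function.Surjective (compContinuousMap ψ) := by
  intro ω
  by_contra hω
  have hclosed : IsClosed (Set.range (compContinuousMap ψ)) :=
    (isCompact_range (map_continuous _)).isClosed
  obtain ⟨f, hf0, hf1, -⟩ := exists_continuous_zero_one_of_isClosed hclosed isClosed_singleton
    (Set.disjoint_singleton_right.mpr hω)
  set g : C(characterSpace ℂ A, ℂ) := ⟨fun χ => (f χ : ℂ), by fun_prop⟩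
  -- `g` vanishes on the range, so every character of `B` kills the image of its Gelfand preimage.
  have hψa : ψ ((gelfandStarTransform A).symm g) = 0 := by
    refine (gelfandTransform_bijective B).1 ?_
    ext χ
    rw [map_zero]
    change gelfandStarTransform A ((gelfandStarTransform A).symm g) (compContinuousMap ψ χ) = 0
    rw [StarAlgEquiv.apply_symm_apply]
    simpa [g] using hf0 (Set.mem_range_self χ)
  have hg : g = 0 := by
    rw [← (gelfandStarTransform A).apply_symm_apply g, hψ (hψa.trans (map_zero ψ).symm), map_zero]
  simpa [g, hf1 rfl] using congr($hg ω)

variable {𝕜 A : Type*} [Field 𝕜] [TopologicalSpace 𝕜] [IsTopologicalRing 𝕜]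
  [Ring A] [TopologicalSpace A] [Algebra 𝕜 A]

lemma apply_eq_zero_or_one_of_isIdempotentElem (ω : characterSpace 𝕜 A) {e : A}
    (he : IsIdempotentElem e) : ω e = 0 ∨ ω e = 1 :=
  IsIdempotentElem.iff_eq_zero_or_one.mp (he.map ω)

lemma isClopen_setOf_apply_eq_one [T2Space 𝕜] {e : A} (he : IsIdempotentElem e) :
    IsClopen {ω : characterSpace 𝕜 A | ω e = 1} := by
  have hcont : Continuous fun ω : characterSpace 𝕜 A => ω e :=
    (eval_continuous e).comp continuous_subtype_val
  have hzero : IsClosed {ω : characterSpace 𝕜 A | ω e = 0} := isClosed_eq hcont continuous_const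
  refine ⟨isClosed_eq hcont continuous_const, ?_⟩
  convert hzero.isOpen_compl using 1
  ext ω
  rcases apply_eq_zero_or_one_of_isIdempotentElem ω he with h | h <;> simp [h]

lemma totallySeparatedSpace_of_isIdempotentElem_separates [T2Space 𝕜]
    (h : ∀ ω₁ ω₂ : characterSpace 𝕜 A, ω₁ ≠ ω₂ → ∃ e, IsIdempotentElem e ∧ ω₁ e ≠ ω₂ e) :
    TotallySeparatedSpace (characterSpace 𝕜 A) := by
  refine totallySeparatedSpace_iff_exists_isClopen.mpr fun ω₁ ω₂ hne => ?_
  obtain ⟨e, he, hω⟩ := h ω₁ ω₂ hne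
  rcases apply_eq_zero_or_one_of_isIdempotentElem ω₁ he with h₁ | h₁
  · refine ⟨{ω | ω e = 1}ᶜ, (isClopen_setOf_apply_eq_one he).compl, by simp [h₁], ?_⟩
    simpa [h₁, eq_comm] using (apply_eq_zero_or_one_of_isIdempotentElem ω₂ he).resolve_left
      (by rwa [h₁, ne_comm] at hω)
  · exact ⟨_, isClopen_setOf_apply_eq_one he, h₁, by simpa [h₁, eq_comm] using hω⟩

end WeakDual.CharacterSpace

section ContinuousMap

variable {Y : Type*} [TopologicalSpace Y] [CompactSpace Y]

-- `{a * b * a}` is the principal ideal `(a * a)`, and `idealOfSet_ofIdeal_eq_closure` describes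
-- the closure of an ideal of `C(Y, ℂ)` by the common zeros of its elements.
lemma mem_herSub_univ_iff [T2Space Y] {a x : C(Y, ℂ)} :
    x ∈ herSub Set.univ a ↔ ∀ y, a y = 0 → x y = 0 := by
  have hspan : {x : C(Y, ℂ) | ∃ b ∈ Set.univ, x = a * b * a} = (Ideal.span {a * a} : Set _) := by
    ext x
    simp only [Set.mem_univ, true_and, SetLike.mem_coe, Ideal.mem_span_singleton']
    exact ⟨fun ⟨b, hb⟩ => ⟨b, by rw [hb]; ring⟩, fun ⟨b, hb⟩ => ⟨b, by rw [← hb]; ring⟩⟩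
  rw [herSub, hspan, ← Ideal.coe_closure, ← ContinuousMap.idealOfSet_ofIdeal_eq_closure,
    SetLike.mem_coe, ContinuousMap.mem_idealOfSet]
  simp only [ContinuousMap.setOfIdeal, Ideal.mem_span_singleton', forall_exists_index,
    forall_apply_eq_imp_iff, ContinuousMap.mul_apply, mul_eq_zero, or_self, compl_compl,
    Set.mem_ofPred_eq]
  exact forall_congr' fun y =>
    ⟨fun h hy => h fun _ => Or.inr hy, fun h hy => h ((hy 1).resolve_left one_ne_zero)⟩

lemma isProjection_charFn {U : Set Y} (hU : IsClopen U) :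
    IsProjection (LocallyConstant.charFn ℂ hU).toContinuousMap := by
  constructor <;> ext y <;> by_cases hy : y ∈ U <;> simp [LocallyConstant.coe_charFn, hy]

lemma apply_eq_of_mem_topologicalClosure_adjoin {S : Set C(Y, ℂ)} {y₁ y₂ : Y}
    (hS : ∀ s ∈ S, s y₁ = s y₂) {d : C(Y, ℂ)}
    (hd : d ∈ (StarAlgebra.adjoin ℂ S).topologicalClosure) : d y₁ = d y₂ := by
  have hclosed : IsClosed (StarAlgHom.equalizer (ContinuousMap.evalStarAlgHom ℂ ℂ y₁)
      (ContinuousMap.evalStarAlgHom ℂ ℂ y₂) : Set C(Y, ℂ)) :=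
    isClosed_eq (continuous_eval_const y₁) (continuous_eval_const y₂)
  exact StarSubalgebra.topologicalClosure_minimal
    (StarAlgHom.adjoin_le_equalizer (ContinuousMap.evalStarAlgHom ℂ ℂ y₁)
      (ContinuousMap.evalStarAlgHom ℂ ℂ y₂) hS) hclosed hd

variable [T2Space Y] (D : StarSubalgebra ℂ C(Y, ℂ)) [IsClosed (D : Set C(Y, ℂ))]

noncomputable def evalCharacter : C(Y, characterSpace ℂ D) :=
  (CharacterSpace.compContinuousMap D.subtype).comp (CharacterSpace.homeoEval Y ℂ : C(Y, _))

@[simp]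
lemma evalCharacter_apply (y : Y) (d : D) : evalCharacter D y d = (d : C(Y, ℂ)) y := rfl

lemma evalCharacter_surjective : Function.Surjective (evalCharacter D) :=
  (CharacterSpace.compContinuousMap_surjective D.subtype Subtype.val_injective).comp
    (CharacterSpace.homeoEval Y ℂ).surjective

lemma exists_isClopen_subset_apply_ne_zero [TotallyDisconnectedSpace (characterSpace ℂ D)]
    (d : D) {K : Set Y} (hK : IsCompact K) (hKd : ∀ y ∈ K, (d : C(Y, ℂ)) y ≠ 0) :
    ∃ U : Set Y, IsClopen U ∧ K ⊆ U ∧ ∀ y ∈ U, (d : C(Y, ℂ)) y ≠ 0 := by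
  have hW : IsOpen {ω : characterSpace ℂ D | ω d ≠ 0} :=
    (isClosed_eq ((eval_continuous d).comp continuous_subtype_val) continuous_const).isOpen_compl
  obtain ⟨C, hC, hKC, hCW⟩ := exists_clopen_of_closed_subset_open
    (hK.image (evalCharacter D).continuous).isClosed hW
    (Set.image_subset_iff.mpr fun y hy => hKd y hy)
  exact ⟨evalCharacter D ⁻¹' C, hC.preimage (evalCharacter D).continuous,
    Set.image_subset_iff.mp hKC, fun y hy => hCW hy⟩

theorem inclusionRealRankZero_of_totallyDisconnectedSpace
    [TotallyDisconnectedSpace (characterSpace ℂ D)] {A : Set C(Y, ℂ)} (hAD : A ⊆ D) :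
    InclusionRealRankZero A Set.univ := by
  intro a ha _ _ x hx _ ε hε
  have hK : IsCompact {y | ε ≤ ‖x y‖} := (isClosed_le continuous_const (by fun_prop)).isCompact
  have haK : ∀ y ∈ {y | ε ≤ ‖x y‖}, a y ≠ 0 := fun y hy hay => by
    rw [Set.mem_ofPred_eq, mem_herSub_univ_iff.mp hx y hay, norm_zero] at hy
    linarith
  obtain ⟨U, hU, hKU, haU⟩ := exists_isClopen_subset_apply_ne_zero D ⟨a, hAD ha⟩ hK haK
  refine ⟨_, mem_herSub_univ_iff.mpr fun y hay => ?_, isProjection_charFn hU, ?_⟩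
  · have hy : y ∉ U := fun hy => haU y hy hay
    simp [LocallyConstant.coe_charFn, hy]
  · rw [ContinuousMap.norm_lt_iff _ hε]
    intro y
    by_cases hy : y ∈ U
    · simp [LocallyConstant.coe_charFn, hy, hε]
    · simpa [LocallyConstant.coe_charFn, hy] using not_le.mp fun h => hy (hKU h)

end ContinuousMap

section RealRankZero

variable {X Y : Type*} [TopologicalSpace X] [CompactSpace X] [T2Space X]
  [TopologicalSpace Y] [CompactSpace Y] [T2Space Y] (φ : C(Y, X))

lemma exists_isProjection_apply_ne_of_apply_ne
    (h : InclusionRealRankZero (Set.range fun f : C(X, ℂ) => f.comp φ) Set.univ)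
    {y₁ y₂ : Y} (hy : φ y₁ ≠ φ y₂) : ∃ q : C(Y, ℂ), IsProjection q ∧ q y₁ ≠ q y₂ := by
  obtain ⟨f, hf₂, hf₁, hf01⟩ := exists_continuous_zero_one_of_isClosed isClosed_singleton
    isClosed_singleton (Set.disjoint_singleton.mpr hy.symm)
  set a : C(Y, ℂ) := (⟨fun x => (f x : ℂ), by fun_prop⟩ : C(X, ℂ)).comp φ
  have ha₁ : a y₁ = 1 := by simp [a, hf₁ rfl]
  have ha₂ : a y₂ = 0 := by simp [a, hf₂ rfl]
  have ha : 0 ≤ a := ContinuousMap.le_def.mpr fun y => by simpa [a] using (hf01 (φ y)).1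
  have haa : a ∈ herSub Set.univ a := mem_herSub_univ_iff.mpr fun _ => id
  obtain ⟨q, hq, hqproj, hqa⟩ :=
    h a ⟨_, rfl⟩ ha (fun h0 => by simp [h0] at ha₁) a haa ha 1 one_pos
  refine ⟨q, hqproj, fun hq₁₂ => ?_⟩
  have hq₂ : q y₂ = 0 := mem_herSub_univ_iff.mp hq y₂ ha₂
  have := (q * a - a).norm_coe_le_norm y₁
  simp only [ContinuousMap.sub_apply, ContinuousMap.mul_apply, hq₁₂, hq₂, ha₁, mul_one, zero_sub,
    norm_neg, norm_one] at this
  linarith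

theorem exists_totallyDisconnectedSpace_of_inclusionRealRankZero
    (h : InclusionRealRankZero (Set.range fun f : C(X, ℂ) => f.comp φ) Set.univ) :
    ∃ D : StarSubalgebra ℂ C(Y, ℂ), IsClosed (D : Set C(Y, ℂ)) ∧
      (Set.range fun f : C(X, ℂ) => f.comp φ) ⊆ (D : Set C(Y, ℂ)) ∧
      TotallyDisconnectedSpace (characterSpace ℂ D) := by
  set S := (Set.range fun f : C(X, ℂ) => f.comp φ) ∪ {p | IsProjection p}
  set D := (StarAlgebra.adjoin ℂ S).topologicalClosure
  have hSD : S ⊆ D := fun _ hs =>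
    StarSubalgebra.le_topologicalClosure _ (StarAlgebra.subset_adjoin ℂ S hs)
  have hD : IsClosed (D : Set C(Y, ℂ)) := StarSubalgebra.isClosed_topologicalClosure _
  refine ⟨D, hD, fun a ha => hSD (Or.inl ha), ?_⟩
  have : TotallySeparatedSpace (characterSpace ℂ D) := by
    refine CharacterSpace.totallySeparatedSpace_of_isIdempotentElem_separates fun ω₁ ω₂ hne => ?_
    have : IsClosed (D : Set C(Y, ℂ)) := hD
    obtain ⟨y₁, rfl⟩ := evalCharacter_surjective D ω₁
    obtain ⟨y₂, rfl⟩ := evalCharacter_surjective D ω₂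
    obtain ⟨q, hq, hq₁₂⟩ : ∃ q : C(Y, ℂ), IsProjection q ∧ q y₁ ≠ q y₂ := by
      by_contra! hP
      have hφ : φ y₁ = φ y₂ := by
        by_contra hφ
        obtain ⟨q, hq, hq₁₂⟩ := exists_isProjection_apply_ne_of_apply_ne φ h hφ
        exact hq₁₂ (hP q hq)
      refine hne (CharacterSpace.ext fun d => apply_eq_of_mem_topologicalClosure_adjoin ?_ d.2)
      rintro s (⟨f, rfl⟩ | hs)
      · simp [hφ]
      · exact hP s hs
    exact ⟨⟨q, hSD (Or.inr hq)⟩, Subtype.ext hq.2, hq₁₂⟩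
  infer_instance

end RealRankZero

set_option synthInstance.maxHeartbeats 1000000 in
theorem stmt11_general {X Y : Type*} [TopologicalSpace X] [CompactSpace X] [T2Space X]
    [TopologicalSpace Y] [CompactSpace Y] [T2Space Y]
    (φ : C(Y, X)) :
    InclusionRealRankZero (Set.range fun f : C(X, ℂ) => f.comp φ) (Set.univ : Set C(Y, ℂ)) ↔
      ∃ D : StarSubalgebra ℂ C(Y, ℂ), IsClosed (D : Set C(Y, ℂ)) ∧
        (Set.range fun f : C(X, ℂ) => f.comp φ) ⊆ (D : Set C(Y, ℂ)) ∧
        TotallyDisconnectedSpace (WeakDual.characterSpace ℂ D) := by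
  refine ⟨exists_totallyDisconnectedSpace_of_inclusionRealRankZero φ, ?_⟩
  rintro ⟨D, hD, hAD, _⟩
  have : IsClosed (D : Set C(Y, ℂ)) := hD
  exact inclusionRealRankZero_of_totallyDisconnectedSpace D hAD

set_option synthInstance.maxHeartbeats 1000000 in
theorem stmt11 {X Y : Type*} [TopologicalSpace X] [CompactSpace X] [T2Space X]
    [TopologicalSpace Y] [CompactSpace Y] [T2Space Y]
    (φ : C(Y, X)) (hφ : Function.Surjective φ) :
    InclusionRealRankZero (Set.range fun f : C(X, ℂ) => f.comp φ) (Set.univ : Set C(Y, ℂ)) ↔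
      ∃ D : StarSubalgebra ℂ C(Y, ℂ), IsClosed (D : Set C(Y, ℂ)) ∧
        (Set.range fun f : C(X, ℂ) => f.comp φ) ⊆ (D : Set C(Y, ℂ)) ∧
        TotallyDisconnectedSpace (WeakDual.characterSpace ℂ D) :=
  stmt11_general φ
end

section
/- Let X and Y be compact Hausdorff spaces and let φ : Y → X be a continuous map, inducing the unital *-homomorphism φ* : C(X) → C(Y), f ↦ f ∘ φ. If φ* has real rank zero, then φ is constant on every connected component of Y: whenever y₁ and y₂ lie in the same connected component of Y, one has φ(y₁) = φ(y₂). -/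
open Filter Topology
open scoped ComplexOrder

/-! If `φ y₁ ≠ φ y₂`, an Urysohn function `g` on `X` with `g (φ y₁) = 1`, `g (φ y₂) = 0` gives
`a = g ∘ φ ≥ 0` in the image of `φ*`. Real rank zero yields a projection `p ∈ cl(a C(Y) a)` that
almost fixes `a²`. Every element of that hereditary subalgebra vanishes at `y₂`, and `p` is
`{0, 1}`-valued, hence constant on the component of `y₂`; so `p y₁ = 0`, whereas `p a² ≈ a²`
forces `p y₁ ≈ 1`. -/

theorem exists_continuousMap_nonneg_eq_one_eq_zero {X 𝕜 : Type*} [TopologicalSpace X]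
    [NormalSpace X] [T1Space X] [RCLike 𝕜] {x₁ x₂ : X} (hx : x₁ ≠ x₂) :
    ∃ g : C(X, 𝕜), 0 ≤ g ∧ g x₁ = 1 ∧ g x₂ = 0 := by
  obtain ⟨f, hf₂, hf₁, hf_mem⟩ := exists_continuous_zero_one_of_isClosed
    (isClosed_singleton (x := x₂)) (isClosed_singleton (x := x₁))
    (Set.disjoint_singleton.2 hx.symm)
  refine ⟨(⟨(↑), RCLike.continuous_ofReal⟩ : C(ℝ, 𝕜)).comp f, fun x => ?_, ?_, ?_⟩
  · simpa using (hf_mem x).1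
  · simp [hf₁ rfl]
  · simp [hf₂ rfl]

theorem apply_eq_zero_of_mem_herSub {Y R : Type*} [TopologicalSpace Y] [CompactSpace Y]
    [NormedRing R] [StarRing R] [ContinuousStar R] [PartialOrder R] {S : Set C(Y, R)}
    {a q : C(Y, R)} {y : Y} (ha : a y = 0) (hq : q ∈ herSub S a) : q y = 0 := by
  refine closure_minimal ?_ (isClosed_eq (continuous_eval_const y) continuous_const) hq
  rintro _ ⟨b, -, rfl⟩
  simp [ha]

theorem ContinuousMap.apply_eq_of_isIdempotentElem_of_mem_connectedComponent
    {Y R : Type*} [TopologicalSpace Y] [TopologicalSpace R] [T1Space R] [Ring R] [ContinuousMul R]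
    [NoZeroDivisors R] {p : C(Y, R)} (hp : IsIdempotentElem p) {y₁ y₂ : Y}
    (hy : y₂ ∈ connectedComponent y₁) : p y₁ = p y₂ := by
  have hp_mem : Set.MapsTo p (connectedComponent y₁) {0, 1} := fun y _ =>
    IsIdempotentElem.iff_eq_zero_or_one.1 (congr($hp y))
  exact isPreconnected_connectedComponent.constant_of_mapsTo (Set.toFinite _).isDiscrete
    p.continuous.continuousOn hp_mem mem_connectedComponent hy

theorem stmt12_general {X Y : Type*} [TopologicalSpace X] [CompactSpace X] [T2Space X]
    [TopologicalSpace Y] [CompactSpace Y] (φ : C(Y, X))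
    (h : InclusionRealRankZero (Set.range fun f : C(X, ℂ) => f.comp φ)
      (Set.univ : Set C(Y, ℂ))) :
    ∀ y₁ y₂ : Y, y₂ ∈ connectedComponent y₁ → φ y₁ = φ y₂ := by
  intro y₁ y₂ hy
  by_contra hne
  obtain ⟨g, hg_nonneg, hg₁, hg₂⟩ := exists_continuousMap_nonneg_eq_one_eq_zero (𝕜 := ℂ) hne
  set a := g.comp φ
  have ha : 0 ≤ a := fun y => hg_nonneg (φ y)
  have ha₁ : a y₁ = 1 := hg₁
  obtain ⟨p, hp_mem, ⟨-, hp_idem⟩, hp_approx⟩ := h a ⟨g, rfl⟩ ha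
    (fun h0 => by simpa [ha₁] using congr($h0 y₁)) (a * a)
    (subset_closure ⟨1, trivial, by rw [mul_one]⟩) (mul_nonneg ha ha) 1 one_pos
  have hp₁ : p y₁ = 0 :=
    (p.apply_eq_of_isIdempotentElem_of_mem_connectedComponent hp_idem hy).trans
      (apply_eq_zero_of_mem_herSub hg₂ hp_mem)
  have hdefect_at : ‖(p * (a * a) - a * a) y₁‖ = 1 := by simp [hp₁, ha₁]
  exact (hdefect_at ▸ (p * (a * a) - a * a).norm_coe_le_norm y₁).not_gt hp_approx

theorem stmt12 {X Y : Type*} [TopologicalSpace X] [CompactSpace X] [T2Space X]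
    [TopologicalSpace Y] [CompactSpace Y] [T2Space Y] (φ : C(Y, X))
    (h : InclusionRealRankZero (Set.range fun f : C(X, ℂ) => f.comp φ)
      (Set.univ : Set C(Y, ℂ))) :
    ∀ y₁ y₂ : Y, y₂ ∈ connectedComponent y₁ → φ y₁ = φ y₂ :=
  stmt12_general φ h
end

section
/- Let A ⊆ B be an inclusion of C*-algebras and let a ∈ A be a positive element. If the inclusion A ⊆ B has real rank zero, then the induced inclusion cl(aAa) ⊆ cl(aBa) of hereditary C*-subalgebras (where cl(aAa) is the norm closure of {a·x·a : x ∈ A} and cl(aBa) is the norm closure of {a·b·a : b ∈ B}) has real rank zero. -/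
/-!
For `c ≥ 0` in `cl(aAa)` we have `c ∈ A` (as `A` is closed), so real rank zero of `A ⊆ B`
already gives an approximate unit of projections in `cl(cBc)`; it suffices to see
`cl(c·cl(aBa)·c) = cl(cBc)`. The set `H = cl(aBa)` is a closed hereditary star subalgebra
containing `c`, so it contains the elements `eₙ = fₙ(c)` of the functional calculus with
`fₙ(x) = min((n+1)|x|, 1)`. Since `c eₙ → c`, every `cbc` is the limit of
`(c eₙ) b (eₙ c) = c (eₙ b eₙ) c` with `eₙ b eₙ ∈ H`.
-/

open Filter Topology

lemma abs_mul_min_sub_self_le {r : ℝ} (hr : 0 < r) (x : ℝ) :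
    |x * min (r * |x|) 1 - x| ≤ 1 / r := by
  have hm0 : 0 ≤ min (r * |x|) 1 := le_min (by positivity) zero_le_one
  have hm1 : min (r * |x|) 1 ≤ 1 := min_le_right _ _
  have hsplit : |x * min (r * |x|) 1 - x| = |x| * (1 - min (r * |x|) 1) := by
    rw [show x * min (r * |x|) 1 - x = -(x * (1 - min (r * |x|) 1)) by ring, abs_neg, abs_mul,
      abs_of_nonneg (sub_nonneg.mpr hm1)]
  rw [hsplit]
  rcases le_or_gt 1 (r * |x|) with hx | hx
  · simp [min_eq_right hx, hr.le]
  · calc |x| * (1 - min (r * |x|) 1) ≤ |x| * 1 := by gcongr; linarith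
      _ ≤ 1 / r := by rw [mul_one, le_div_iff₀ hr]; linarith

section NormedRing

variable {B : Type*} [NonUnitalNormedRing B]

lemma herSub_mono {S T : Set B} (hST : S ⊆ T) (a : B) : herSub S a ⊆ herSub T a :=
  closure_mono fun _ ⟨b, hb, hx⟩ => ⟨b, hST hb, hx⟩

lemma mul_mul_mem_herSub_univ {a u v : B} (hu : u ∈ herSub Set.univ a)
    (hv : v ∈ herSub Set.univ a) (b : B) : u * b * v ∈ herSub Set.univ a := by
  refine map_mem_closure₂ (f := fun u v : B => u * b * v) (by fun_prop) hu hv ?_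
  rintro _ ⟨s, -, rfl⟩ _ ⟨t, -, rfl⟩
  exact ⟨s * (a * b * a) * t, trivial, by simp only [mul_assoc]⟩

end NormedRing

section CStarAlgebra

variable {B : Type*} [NonUnitalCStarAlgebra B]

lemma norm_mul_cfcₙ_min_sub_self_le {c : B} (hc : IsSelfAdjoint c) {r : ℝ} (hr : 0 < r) :
    ‖c * cfcₙ (fun x : ℝ => min (r * |x|) 1) c - c‖ ≤ 1 / r := by
  have hcfc : c * cfcₙ (fun x : ℝ => min (r * |x|) 1) c - c =
      cfcₙ (fun x : ℝ => x * min (r * |x|) 1 - x) c := by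
    rw [cfcₙ_sub _ _ c, cfcₙ_mul _ _ c, cfcₙ_id' ℝ c]
  rw [hcfc]
  exact norm_cfcₙ_le fun x _ => abs_mul_min_sub_self_le hr x

lemma tendsto_mul_cfcₙ_min {c : B} (hc : IsSelfAdjoint c) :
    Tendsto (fun n : ℕ => c * cfcₙ (fun x : ℝ => min ((n + 1) * |x|) 1) c) atTop (𝓝 c) := by
  rw [tendsto_iff_norm_sub_tendsto_zero]
  exact squeeze_zero (fun _ => norm_nonneg _)
    (fun n => norm_mul_cfcₙ_min_sub_self_le hc n.cast_add_one_pos)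
    tendsto_one_div_add_atTop_nhds_zero_nat

lemma herSub_subset {A : NonUnitalStarSubalgebra ℂ B} (hA : IsClosed (A : Set B)) {a : B}
    (ha : a ∈ A) : herSub A a ⊆ A :=
  closure_minimal (fun _ ⟨_, hb, hx⟩ => hx ▸ A.mul_mem (A.mul_mem ha hb) ha) hA

def sandwichSubalgebra (a : B) (ha : IsSelfAdjoint a) : NonUnitalStarSubalgebra ℂ B where
  carrier := {x | ∃ b ∈ (Set.univ : Set B), x = a * b * a}
  add_mem' := by
    rintro _ _ ⟨s, -, rfl⟩ ⟨t, -, rfl⟩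
    exact ⟨s + t, trivial, by rw [mul_add, add_mul]⟩
  zero_mem' := ⟨0, trivial, by simp⟩
  mul_mem' := by
    rintro _ _ ⟨s, -, rfl⟩ ⟨t, -, rfl⟩
    exact ⟨s * (a * a) * t, trivial, by simp only [mul_assoc]⟩
  smul_mem' := by
    rintro r _ ⟨t, -, rfl⟩
    exact ⟨r • t, trivial, by rw [mul_smul_comm, smul_mul_assoc]⟩
  star_mem' := by
    rintro _ ⟨t, -, rfl⟩
    exact ⟨star t, trivial, by rw [star_mul, star_mul, ha.star_eq, mul_assoc]⟩

lemma coe_topologicalClosure_sandwichSubalgebra (a : B) (ha : IsSelfAdjoint a) :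
    ((sandwichSubalgebra a ha).topologicalClosure : Set B) = herSub Set.univ a :=
  rfl

lemma herSub_univ_subset_herSub {S : NonUnitalStarSubalgebra ℂ B} (hS : IsClosed (S : Set B))
    (hS_her : ∀ u ∈ S, ∀ v ∈ S, ∀ b, u * b * v ∈ S) {c : B} (hcS : c ∈ S)
    (hc : IsSelfAdjoint c) : herSub Set.univ c ⊆ herSub S c := by
  refine closure_minimal ?_ isClosed_closure
  rintro _ ⟨b, -, rfl⟩
  set e : ℕ → B := fun n => cfcₙ (fun x : ℝ => min ((n + 1) * |x|) 1) c
  have he : ∀ n, e n ∈ S := fun n => cfcₙ_mem (hs := hS) _ hcS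
  have hce : ∀ n, e n * c = c * e n := fun n => ((Commute.refl c).cfcₙ_real _).eq
  have hlim : Tendsto (fun n => c * e n) atTop (𝓝 c) := tendsto_mul_cfcₙ_min hc
  have hlim' : Tendsto (fun n => e n * c) atTop (𝓝 c) := by simpa only [hce] using hlim
  refine mem_closure_of_tendsto ((hlim.mul_const b).mul hlim') (Eventually.of_forall fun n => ?_)
  exact ⟨e n * b * e n, hS_her _ (he n) _ (he n) b, by simp only [mul_assoc]⟩

lemma herSub_herSub_univ {a c : B} (ha : IsSelfAdjoint a) (hc : IsSelfAdjoint c)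
    (hca : c ∈ herSub Set.univ a) : herSub (herSub Set.univ a) c = herSub Set.univ c := by
  refine (herSub_mono (Set.subset_univ _) c).antisymm ?_
  rw [← coe_topologicalClosure_sandwichSubalgebra a ha] at hca ⊢
  exact herSub_univ_subset_herSub isClosed_closure
    (fun u hu v hv b => mul_mul_mem_herSub_univ hu hv b) hca hc

end CStarAlgebra

theorem stmt16 {B : Type*} [NonUnitalCStarAlgebra B] [PartialOrder B] [StarOrderedRing B]
    (A : NonUnitalStarSubalgebra ℂ B) (hAc : IsClosed (A : Set B))
    (a : B) (haA : a ∈ A) (ha : 0 ≤ a)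
    (h : InclusionRealRankZero (A : Set B) (Set.univ : Set B)) :
    InclusionRealRankZero (herSub (A : Set B) a) (herSub (Set.univ : Set B) a) := by
  intro c hc hc0 hc_ne
  rw [herSub_herSub_univ ha.isSelfAdjoint hc0.isSelfAdjoint
    (herSub_mono (Set.subset_univ _) a hc)]
  exact h c (herSub_subset hAc haA hc) hc0 hc_ne
end
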